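/- arXiv:2312.13588 — 10 statements merged into one kernel-verified Lean document; each statement's English description precedes it below -/
import Mathlib

section
/- For every n ≡ 2 (mod 4) with n ≥ 6, the maximum size of a family of subsets of [n] satisfying the (1,1,0)-intersection pattern modulo 2 equals n/2 + 1; that is, f_{(1,1,0)}(n) = n/2 + 1. -/
open Finset

/-- A family `F` of subsets of `Fin n` satisfies the `α`-intersection pattern modulo 2
(for `α = (α_1, …, α_k)`, here 0-indexed: `α i` governs intersections of `i+1` distinct sets)
if every subfamily of `i+1` distinct sets has intersection of size `≡ α_i (mod 2)`. -/
def SatisfiesPattern (n k : ℕ) (α : Fin k → ZMod 2) (F : Finset (Finset (Fin n))) : Prop :=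
  ∀ i : Fin k, ∀ S : Finset (Finset (Fin n)), S ⊆ F → S.card = i.val + 1 →
    ((S.inf id).card : ZMod 2) = α i

/-- `maxPattern k α n` is `f_α(n)`, the maximum size of a family of subsets of `[n]`
satisfying the `α`-intersection pattern modulo 2. -/
noncomputable def maxPattern (k : ℕ) (α : Fin k → ZMod 2) (n : ℕ) : ℕ :=
  sSup {m : ℕ | ∃ F : Finset (Finset (Fin n)), SatisfiesPattern n k α F ∧ F.card = m}

/-! Upper bound: fix `S ∈ F`. Over `ZMod 2`, the indicator vectors of the other members,
restricted to `S`, are orthonormal (each `A ∩ S` is odd, each `A ∩ B ∩ S` even), so there are at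
most `|S|` of them. Restricted to `Sᶜ`, their Gram matrix is `J - I`, since
`|A ∩ B ∩ Sᶜ| = |A ∩ B| - |A ∩ B ∩ S|`; this gives `|F| - 1 ≤ n - |S| + 1`. Adding the two bounds,
`2|F| ≤ n + 3`.

Lower bound: for `n = 2m` with `m` odd, take points `a_j, b_j` (`j < m`), the set `{a_j}`, and the
`m` sets `{a_j} ∪ {b_i | i ≠ j}`. All have size `m`, pairwise intersections have size `1` or
`m - 2`, and triple intersections have size `0` or `m - 3`. -/

section IndicatorVectors

variable {R : Type*} [CommRing R]

variable (R) in
def memVector {α : Type*} [DecidableEq α] (S A : Finset α) : S → R :=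
  fun x => if (x : α) ∈ A then 1 else 0

theorem memVector_dotProduct {α : Type*} [DecidableEq α] (S A B : Finset α) :
    memVector R S A ⬝ᵥ memVector R S B = #(S ∩ A ∩ B) := by
  simp only [dotProduct, memVector, ite_zero_mul_ite_zero, mul_one]
  rw [Finset.sum_coe_sort S (fun x => if x ∈ A ∧ x ∈ B then (1 : R) else 0), sum_boole]
  congr 2
  ext x
  simp

variable [StrongRankCondition R]

theorem card_le_card_of_dotProduct_eq_ite {ι σ : Type*} [Fintype ι] [Fintype σ] [DecidableEq ι]
    (d v : ι → σ → R) (h : ∀ i j, d i ⬝ᵥ v j = if i = j then 1 else 0) :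
    Fintype.card ι ≤ Fintype.card σ := by
  have hmul : Matrix.of d * (Matrix.of v).transpose = 1 := by
    ext i j
    simp [Matrix.mul_apply, Matrix.one_apply, ← h i j, dotProduct]
  calc Fintype.card ι = (1 : Matrix ι ι R).rank := Matrix.rank_one.symm
    _ ≤ (Matrix.of d).rank := hmul ▸ Matrix.rank_mul_le_left _ _
    _ ≤ Fintype.card σ := Matrix.rank_le_card_width _

variable {α ι : Type*} [DecidableEq α] [Fintype ι] [DecidableEq ι]

theorem card_le_card_of_cast_card_inter_eq_ite (S : Finset α) (A : ι → Finset α)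
    (h : ∀ i j, (#(S ∩ A i ∩ A j) : R) = if i = j then 1 else 0) : Fintype.card ι ≤ #S := by
  simpa using card_le_card_of_dotProduct_eq_ite (fun i => memVector R S (A i))
    (fun i => memVector R S (A i)) (by simpa only [memVector_dotProduct] using h)

theorem card_le_card_add_one_of_cast_card_inter_eq_ite (S : Finset α) (A : ι → Finset α)
    (h : ∀ i j, (#(S ∩ A i ∩ A j) : R) = if i = j then 0 else 1) :
    Fintype.card ι ≤ #S + 1 := by
  cases isEmpty_or_nonempty ι with
  | inl _ => simp
  | inr hι =>
    obtain ⟨i₀⟩ := hι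
    -- for `i, j ≠ i₀`, the pairing of `χ(A i₀) - χ(A i)` with `χ(A j)` is `1 - [i ≠ j] = [i = j]`
    have hdual : ∀ i j : {i // i ≠ i₀},
        (memVector R S (A i₀) - memVector R S (A i)) ⬝ᵥ memVector R S (A j) =
          if i = j then 1 else 0 := by
      intro i j
      rw [sub_dotProduct, memVector_dotProduct, memVector_dotProduct, h, h, if_neg j.2.symm]
      simp only [Subtype.ext_iff]
      split_ifs <;> simp
    simpa only [ne_eq, Fintype.card_subtype_compl, Fintype.card_unique, Fintype.card_coe,
      tsub_le_iff_right] using card_le_card_of_dotProduct_eq_ite _ _ hdual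

end IndicatorVectors

structure HasPattern110 {α : Type*} [DecidableEq α] (F : Finset (Finset α)) : Prop where
  card : ∀ ⦃A⦄, A ∈ F → (#A : ZMod 2) = 1
  card_inter : ∀ ⦃A B⦄, A ∈ F → B ∈ F → A ≠ B → (#(A ∩ B) : ZMod 2) = 1
  card_inter_inter : ∀ ⦃A B C⦄, A ∈ F → B ∈ F → C ∈ F → A ≠ B → A ≠ C → B ≠ C →
    (#(A ∩ B ∩ C) : ZMod 2) = 0

theorem satisfiesPattern_110_iff {n : ℕ} {F : Finset (Finset (Fin n))} :
    SatisfiesPattern n 3 ![1, 1, 0] F ↔ HasPattern110 F := by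
  constructor
  · intro hF
    refine ⟨fun A hA => ?_, fun A B hA hB hAB => ?_, fun A B C hA hB hC hAB hAC hBC => ?_⟩
    · simpa using hF 0 {A} (by simpa) rfl
    · simpa using hF 1 {A, B} (by simp [insert_subset_iff, hA, hB]) (card_pair hAB)
    · simpa [inter_assoc] using hF 2 {A, B, C} (by simp [insert_subset_iff, hA, hB, hC])
        (card_eq_three.2 ⟨A, B, C, hAB, hAC, hBC, rfl⟩)
  · rintro hF ⟨i, hi⟩ S hS hcard
    interval_cases i
    · obtain ⟨A, rfl⟩ := card_eq_one.1 hcard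
      simpa using hF.card (hS (mem_singleton_self A))
    · obtain ⟨A, B, hAB, rfl⟩ := card_eq_two.1 hcard
      rw [insert_subset_iff, singleton_subset_iff] at hS
      simpa using hF.card_inter hS.1 hS.2 hAB
    · obtain ⟨A, B, C, hAB, hAC, hBC, rfl⟩ := card_eq_three.1 hcard
      simp only [insert_subset_iff, singleton_subset_iff] at hS
      simpa [inter_assoc] using hF.card_inter_inter hS.1 hS.2.1 hS.2.2 hAB hAC hBC

namespace HasPattern110

variable {α : Type*} [DecidableEq α] {F : Finset (Finset α)}

theorem map {β : Type*} [DecidableEq β] (hF : HasPattern110 F) (e : α ↪ β) :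
    HasPattern110 (F.map (mapEmbedding e).toEmbedding) := by
  refine ⟨?_, ?_, ?_⟩ <;> simp only [mem_map, RelEmbedding.coe_toEmbedding, mapEmbedding_apply]
  · rintro _ ⟨A, hA, rfl⟩
    simpa using hF.card hA
  · rintro _ _ ⟨A, hA, rfl⟩ ⟨B, hB, rfl⟩ hAB
    simpa [← map_inter] using hF.card_inter hA hB (ne_of_apply_ne _ hAB)
  · rintro _ _ _ ⟨A, hA, rfl⟩ ⟨B, hB, rfl⟩ ⟨C, hC, rfl⟩ hAB hAC hBC
    simpa [← map_inter] using hF.card_inter_inter hA hB hC (ne_of_apply_ne _ hAB)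
      (ne_of_apply_ne _ hAC) (ne_of_apply_ne _ hBC)

theorem cast_card_inter_inter_eq_ite (hF : HasPattern110 F) {S A B : Finset α} (hS : S ∈ F)
    (hA : A ∈ F) (hB : B ∈ F) (hAS : A ≠ S) (hBS : B ≠ S) :
    (#(S ∩ A ∩ B) : ZMod 2) = if A = B then 1 else 0 := by
  split_ifs with hAB
  · subst hAB
    rw [inter_assoc, inter_self]
    exact hF.card_inter hS hA hAS.symm
  · exact hF.card_inter_inter hS hA hB hAS.symm hBS.symm hAB

theorem cast_card_compl_inter_inter_eq_ite [Fintype α] (hF : HasPattern110 F) {S A B : Finset α}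
    (hS : S ∈ F) (hA : A ∈ F) (hB : B ∈ F) (hAS : A ≠ S) (hBS : B ≠ S) :
    (#(Sᶜ ∩ A ∩ B) : ZMod 2) = if A = B then 0 else 1 := by
  have hsplit : (#(Sᶜ ∩ A ∩ B) : ZMod 2) = #(A ∩ B) - #(S ∩ A ∩ B) := by
    rw [eq_sub_iff_add_eq, ← Nat.cast_add, inter_assoc, inter_assoc, inter_comm S,
      ← card_sdiff_add_card_inter (A ∩ B) S, sdiff_eq_inter_compl, inter_comm _ Sᶜ]
  rw [hsplit, hF.cast_card_inter_inter_eq_ite hS hA hB hAS hBS]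
  split_ifs with hAB
  · rw [hAB, inter_self, hF.card hB, sub_self]
  · rw [hF.card_inter hA hB hAB, sub_zero]

theorem two_mul_card_le_card_add_three [Fintype α] (hF : HasPattern110 F) :
    2 * #F ≤ Fintype.card α + 3 := by
  obtain rfl | ⟨S, hS⟩ := F.eq_empty_or_nonempty
  · simp
  have hmem : ∀ A : F.erase S, (A : Finset α) ∈ F ∧ (A : Finset α) ≠ S := fun A =>
    ⟨mem_of_mem_erase A.2, ne_of_mem_erase A.2⟩
  have hinside := card_le_card_of_cast_card_inter_eq_ite S (fun A : F.erase S => (A : Finset α))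
    fun A B => by
      simpa only [Subtype.coe_inj] using hF.cast_card_inter_inter_eq_ite hS (hmem A).1 (hmem B).1
        (hmem A).2 (hmem B).2
  have houtside := card_le_card_add_one_of_cast_card_inter_eq_ite Sᶜ
    (fun A : F.erase S => (A : Finset α)) fun A B => by
      simpa only [Subtype.coe_inj] using
        hF.cast_card_compl_inter_inter_eq_ite hS (hmem A).1 (hmem B).1 (hmem A).2 (hmem B).2
  rw [Fintype.card_coe, card_erase_of_mem hS] at hinside houtside
  rw [card_compl] at houtside
  have hS_pos := card_pos.2 ⟨S, hS⟩
  have hS_le := card_le_univ S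
  omega

end HasPattern110

theorem Finset.disjSum_inter_disjSum {α β : Type*} [DecidableEq α] [DecidableEq β]
    (s s' : Finset α) (t t' : Finset β) :
    s.disjSum t ∩ s'.disjSum t' = (s ∩ s').disjSum (t ∩ t') := by
  ext (x | x) <;> simp

section Construction

variable {α : Type*} [Fintype α] [DecidableEq α]

-- with `a = inl` and `b = inr`: `none` gives `{a_j}`, and `some j` gives `{a_j} ∪ {b_i | i ≠ j}`
def extremalSet : Option α → Finset (α ⊕ α)
  | none => univ.disjSum ∅
  | some j => ({j} : Finset α).disjSum {j}ᶜ

theorem card_extremalSet (p : Option α) : #(extremalSet p) = Fintype.card α := by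
  cases p with
  | none => simp [extremalSet]
  | some j =>
    have := Fintype.card_pos_iff.2 ⟨j⟩
    simp only [extremalSet, card_disjSum, card_singleton, card_compl]
    omega

theorem extremalSet_injective (h2 : 2 ≤ Fintype.card α) :
    Function.Injective (extremalSet (α := α)) := by
  have hinr (k : α) : extremalSet none ≠ extremalSet (some k) := by
    obtain ⟨j, hj⟩ := Fintype.exists_ne_of_one_lt_card h2 k
    intro h
    simpa [extremalSet, hj] using congrArg (Sum.inr j ∈ ·) h
  rintro (_ | j) (_ | k) h
  · rfl
  · exact absurd h (hinr k)
  · exact absurd h.symm (hinr j)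
  · simpa [extremalSet] using h

theorem cast_card_extremalSet_inter (hodd : Odd (Fintype.card α)) (h3 : 3 ≤ Fintype.card α)
    {p q : Option α} (hpq : p ≠ q) : (#(extremalSet p ∩ extremalSet q) : ZMod 2) = 1 := by
  have hodd' : ((Fintype.card α - 2 : ℕ) : ZMod 2) = 1 :=
    (Nat.Odd.sub_even (by omega) hodd even_two).natCast_zmod_two
  clear hodd h3
  rcases p with _ | j <;> rcases q with _ | k <;>
    simp_all [extremalSet, disjSum_inter_disjSum, -disjSum_empty, -empty_disjSum, ← compl_union,
      card_compl, Ne.symm, Nat.sub_sub]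

theorem cast_card_extremalSet_inter_inter (hodd : Odd (Fintype.card α)) {p q r : Option α}
    (hpq : p ≠ q) (hpr : p ≠ r) (hqr : q ≠ r) :
    (#(extremalSet p ∩ extremalSet q ∩ extremalSet r) : ZMod 2) = 0 := by
  have heven : ((Fintype.card α - 3 : ℕ) : ZMod 2) = 0 :=
    (Nat.Odd.sub_odd hodd (by decide)).natCast_zmod_two
  clear hodd
  rcases p with _ | j <;> rcases q with _ | k <;> rcases r with _ | l <;>
    simp_all [extremalSet, disjSum_inter_disjSum, -disjSum_empty, -empty_disjSum, ← compl_union,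
      card_compl, Ne.symm, Nat.sub_sub]

theorem hasPattern110_image_extremalSet (hodd : Odd (Fintype.card α))
    (h3 : 3 ≤ Fintype.card α) : HasPattern110 (univ.image (extremalSet (α := α))) := by
  refine ⟨?_, ?_, ?_⟩ <;> simp only [mem_image, mem_univ, true_and]
  · rintro _ ⟨p, rfl⟩
    rw [card_extremalSet]
    exact hodd.natCast_zmod_two
  · rintro _ _ ⟨p, rfl⟩ ⟨q, rfl⟩ hpq
    exact cast_card_extremalSet_inter hodd h3 (ne_of_apply_ne _ hpq)
  · rintro _ _ _ ⟨p, rfl⟩ ⟨q, rfl⟩ ⟨r, rfl⟩ hpq hpr hqr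
    exact cast_card_extremalSet_inter_inter hodd (ne_of_apply_ne _ hpq) (ne_of_apply_ne _ hpr)
      (ne_of_apply_ne _ hqr)

end Construction

theorem f_110_mod4_2 (n : ℕ) (h4 : n % 4 = 2) (h6 : 6 ≤ n) :
    maxPattern 3 ![1, 1, 0] n = n / 2 + 1 := by
  obtain ⟨m, rfl⟩ : ∃ m, n = m + m := ⟨n / 2, by omega⟩
  have hodd : Odd (Fintype.card (Fin m)) := by
    rw [Fintype.card_fin, Nat.odd_iff]
    omega
  have h3 : 3 ≤ Fintype.card (Fin m) := by
    rw [Fintype.card_fin]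
    omega
  have hF := (hasPattern110_image_extremalSet hodd h3).map finSumFinEquiv.toEmbedding
  refine IsGreatest.csSup_eq ⟨⟨_, satisfiesPattern_110_iff.2 hF, ?_⟩, ?_⟩
  · rw [card_map, card_image_of_injective _ (extremalSet_injective (by omega)), card_univ,
      Fintype.card_option, Fintype.card_fin]
    omega
  · rintro _ ⟨F, hF, rfl⟩
    have := (satisfiesPattern_110_iff.1 hF).two_mul_card_le_card_add_three
    rw [Fintype.card_fin] at this
    omega
end

section
/- For every n ≡ 3 (mod 4) with n ≥ 7, the maximum size of a family of subsets of [n] satisfying the (0,0,1)-intersection pattern modulo 2 equals (n-1)/2 + 1; that is, f_{(0,0,1)}(n) = (n+1)/2. -/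
open Finset

/-!
Sizes and pairwise intersections in `F` are even, so the characteristic vectors `1_A ∈ 𝔽₂ⁿ`
of the members of `F` are orthogonal to each other and to themselves. After removing one member
`f₀` they are also linearly independent: if `∑_{A ∈ S} 1_A = 0` for some nonempty
`S ⊆ F \ {f₀}`, pairing with `1_{g ∩ k}` for distinct `g, k ∈ F` shows that `|S \ {g, k}|` is
even, since every `A ∈ S \ {g, k}` contributes the odd number `|g ∩ k ∩ A|`; taking `{g, f₀}`
and then a pair meeting `S` in zero or two sets gives opposite parities for `|S|`. A matrix `M`
with independent rows and `M Mᵀ = 0` has `2 rank M ≤ n`, so `2 (|F| - 1) ≤ n`.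

For `n = 2m - 1` with `m` even the bound `m` is attained by `{0, …, m-1}` together with the sets
`{0, x} ∪ ({m, …, 2m-2} \ {m-1+x})` for `0 < x < m`.
-/

theorem linearIndepOn_zmod_two_of_sum_eq_zero {ι M : Type*} [AddCommGroup M] [Module (ZMod 2) M]
    {v : ι → M} {s : Set ι} (h : ∀ t : Finset ι, ↑t ⊆ s → ∑ i ∈ t, v i = 0 → t = ∅) :
    LinearIndepOn (ZMod 2) v s := by
  rw [linearIndepOn_iff]
  intro l hl hl0
  have hone : ∀ i ∈ l.support, l i • v i = v i := fun i hi => by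
    rw [(by decide : ∀ z : ZMod 2, z ≠ 0 → z = 1) _ (Finsupp.mem_support_iff.mp hi), one_smul]
  rw [Finsupp.linearCombination_apply, Finsupp.sum, sum_congr rfl hone] at hl0
  exact Finsupp.support_eq_empty.mp (h l.support hl hl0)

section CharVec

variable {α : Type*} [Fintype α] [DecidableEq α]

def charVec (R : Type*) [Zero R] [One R] (A : Finset α) : α → R :=
  fun a => if a ∈ A then 1 else 0

theorem charVec_dotProduct_charVec (R : Type*) [NonAssocSemiring R] (A B : Finset α) :
    charVec R A ⬝ᵥ charVec R B = ((A ∩ B).card : R) := by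
  simp [charVec, dotProduct, ← ite_and, ← mem_inter, inter_comm]

end CharVec

theorem satisfiesPattern_001_iff {n : ℕ} {F : Finset (Finset (Fin n))} :
    SatisfiesPattern n 3 ![0, 0, 1] F ↔
      (∀ A ∈ F, Even A.card) ∧ (∀ A ∈ F, ∀ B ∈ F, A ≠ B → Even (A ∩ B).card) ∧
      ∀ A ∈ F, ∀ B ∈ F, ∀ C ∈ F, A ≠ B → A ≠ C → B ≠ C → Odd (A ∩ B ∩ C).card := by
  simp only [← ZMod.natCast_eq_zero_iff_even, ← ZMod.natCast_eq_one_iff_odd]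
  constructor
  · intro hF
    refine ⟨fun A hA => ?_, fun A hA B hB hAB => ?_, fun A hA B hB C hC hAB hAC hBC => ?_⟩
    · simpa using hF 0 {A} (by simpa) rfl
    · simpa using hF 1 {A, B} (by simp [insert_subset_iff, hA, hB]) (card_pair hAB)
    · simpa [inter_assoc] using hF 2 {A, B, C} (by simp [insert_subset_iff, hA, hB, hC])
        (card_eq_three.mpr ⟨A, B, C, hAB, hAC, hBC, rfl⟩)
  · rintro ⟨h1, h2, h3⟩ i S hS hcard
    fin_cases i
    · obtain ⟨A, rfl⟩ := card_eq_one.mp hcard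
      simpa using h1 A (by simpa using hS)
    · obtain ⟨A, B, hAB, rfl⟩ := card_eq_two.mp hcard
      rw [insert_subset_iff, singleton_subset_iff] at hS
      simpa using h2 A hS.1 B hS.2 hAB
    · obtain ⟨A, B, C, hAB, hAC, hBC, rfl⟩ := card_eq_three.mp hcard
      simp only [insert_subset_iff, singleton_subset_iff] at hS
      simpa [inter_assoc] using h3 A hS.1 B hS.2.1 C hS.2.2 hAB hAC hBC

namespace SatisfiesPattern

variable {n : ℕ} {F : Finset (Finset (Fin n))}

theorem even_card_sdiff_pair (hF : SatisfiesPattern n 3 ![0, 0, 1] F)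
    {g k : Finset (Fin n)} (hg : g ∈ F) (hk : k ∈ F) (hgk : g ≠ k)
    {S : Finset (Finset (Fin n))} (hS : S ⊆ F) (hsum : ∑ A ∈ S, charVec (ZMod 2) A = 0) :
    Even (S \ {g, k}).card := by
  obtain ⟨-, h2, h3⟩ := satisfiesPattern_001_iff.mp hF
  have hterm : ∀ A ∈ S,
      ((g ∩ k ∩ A).card : ZMod 2) = if A ∉ ({g, k} : Finset _) then 1 else 0 := by
    intro A hA
    by_cases hAg : A = g
    · simpa [hAg, inter_comm g k] using ZMod.natCast_eq_zero_iff_even.mpr (h2 g hg k hk hgk)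
    by_cases hAk : A = k
    · simpa [hAk] using ZMod.natCast_eq_zero_iff_even.mpr (h2 g hg k hk hgk)
    simpa [hAg, hAk] using ZMod.natCast_eq_one_iff_odd.mpr
      (h3 g hg k hk A (hS hA) hgk (Ne.symm hAg) (Ne.symm hAk))
  rw [← ZMod.natCast_eq_zero_iff_even]
  calc ((S \ {g, k}).card : ZMod 2) = ∑ A ∈ S, ((g ∩ k ∩ A).card : ZMod 2) := by
        rw [sum_congr rfl hterm, sum_boole, sdiff_eq_filter]
    _ = charVec (ZMod 2) (g ∩ k) ⬝ᵥ ∑ A ∈ S, charVec (ZMod 2) A := by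
        simp only [dotProduct_sum, charVec_dotProduct_charVec]
    _ = 0 := by rw [hsum, dotProduct_zero]

theorem eq_empty_of_sum_charVec_eq_zero (hF : SatisfiesPattern n 3 ![0, 0, 1] F)
    (hF3 : 3 ≤ F.card) {f₀ : Finset (Fin n)} (hf₀ : f₀ ∈ F) {S : Finset (Finset (Fin n))}
    (hS : S ⊆ F.erase f₀) (hsum : ∑ A ∈ S, charVec (ZMod 2) A = 0) : S = ∅ := by
  have hSF : S ⊆ F := hS.trans (erase_subset _ _)
  by_contra hne
  obtain ⟨g, hg⟩ := nonempty_iff_ne_empty.mpr hne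
  obtain ⟨hgf₀, hgF⟩ := mem_erase.mp (hS hg)
  obtain hSg | ⟨g', hg'⟩ := (S.erase g).eq_empty_or_nonempty
  · replace hSg : S = {g} := (erase_eq_empty_iff S g).mp hSg |>.resolve_left hne
    obtain ⟨a, ha, b, hb, hab⟩ := one_lt_card.mp
      (show 1 < (F.erase g).card by rw [card_erase_of_mem hgF]; omega)
    have h := hF.even_card_sdiff_pair (mem_of_mem_erase ha) (mem_of_mem_erase hb) hab hSF hsum
    rw [hSg, sdiff_eq_self_of_disjoint (by simp [(ne_of_mem_erase ha).symm,
      (ne_of_mem_erase hb).symm])] at h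
    simp at h
  · obtain ⟨hg'g, hg'⟩ := mem_erase.mp hg'
    have h₁ := hF.even_card_sdiff_pair hgF hf₀ hgf₀ hSF hsum
    have h₂ := hF.even_card_sdiff_pair hgF (hSF hg') (Ne.symm hg'g) hSF hsum
    rw [show S \ {g, f₀} = S.erase g by ext A; simp; grind, card_erase_of_mem hg] at h₁
    rw [show S \ {g, g'} = (S.erase g).erase g' by ext A; simp; grind,
      card_erase_of_mem (mem_erase.mpr ⟨hg'g, hg'⟩), card_erase_of_mem hg] at h₂
    have := one_lt_card.mpr ⟨g, hg, g', hg', Ne.symm hg'g⟩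
    rw [Nat.even_iff] at h₁ h₂
    omega

theorem linearIndepOn_charVec (hF : SatisfiesPattern n 3 ![0, 0, 1] F) (hF3 : 3 ≤ F.card)
    {f₀ : Finset (Fin n)} (hf₀ : f₀ ∈ F) :
    LinearIndepOn (ZMod 2) (charVec (ZMod 2)) (F.erase f₀ : Set (Finset (Fin n))) :=
  linearIndepOn_zmod_two_of_sum_eq_zero fun _ hS hsum =>
    hF.eq_empty_of_sum_charVec_eq_zero hF3 hf₀ (coe_subset.mp hS) hsum

theorem two_mul_card_sub_one_le (hF : SatisfiesPattern n 3 ![0, 0, 1] F) (hF3 : 3 ≤ F.card) :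
    2 * (F.card - 1) ≤ n := by
  obtain ⟨f₀, hf₀⟩ := card_pos.mp (by omega : 0 < F.card)
  obtain ⟨h1, h2, -⟩ := satisfiesPattern_001_iff.mp hF
  let M : Matrix (F.erase f₀) (Fin n) (ZMod 2) := fun A => charVec (ZMod 2) A
  have hrank : M.rank = F.card - 1 := by
    rw [LinearIndependent.rank_matrix (M := M) (hF.linearIndepOn_charVec hF3 hf₀), Fintype.card_coe,
      card_erase_of_mem hf₀]
  have hMMt : M * M.transpose = 0 := by
    ext A B
    rw [Matrix.mul_apply', Matrix.zero_apply]
    change charVec (ZMod 2) A.1 ⬝ᵥ charVec (ZMod 2) B.1 = 0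
    rw [charVec_dotProduct_charVec, ZMod.natCast_eq_zero_iff_even]
    by_cases hAB : A = B
    · simpa [hAB] using h1 B (mem_of_mem_erase B.2)
    · exact h2 A (mem_of_mem_erase A.2) B (mem_of_mem_erase B.2) (Subtype.coe_ne_coe.mpr hAB)
  have := Matrix.rank_add_rank_le_card_of_mul_eq_zero hMMt
  rw [Matrix.rank_transpose, hrank, Fintype.card_fin] at this
  omega

theorem card_le (hF : SatisfiesPattern n 3 ![0, 0, 1] F) (hn : 2 ≤ n) : F.card ≤ n / 2 + 1 := by
  by_cases hF3 : 3 ≤ F.card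
  · have := hF.two_mul_card_sub_one_le hF3
    omega
  · omega

end SatisfiesPattern

theorem Finset.card_eq_of_forall_mem_iff_val_mem {n : ℕ} {s : Finset (Fin n)} {C : Finset ℕ}
    (hC : ∀ c ∈ C, c < n) (h : ∀ j : Fin n, j ∈ s ↔ (j : ℕ) ∈ C) : s.card = C.card := by
  rw [← card_attachFin C hC]
  congr 1
  ext j
  rw [h, mem_attachFin]

section Construction

variable {m n : ℕ}

def patternSet (m n x : ℕ) : Finset (Fin n) :=
  univ.filter fun j => (x = 0 ∧ (j : ℕ) < m) ∨
    (x ≠ 0 ∧ ((j : ℕ) = 0 ∨ (j : ℕ) = x ∨ (m ≤ (j : ℕ) ∧ (j : ℕ) ≠ m - 1 + x)))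

theorem mem_patternSet {x : ℕ} {j : Fin n} : j ∈ patternSet m n x ↔ (x = 0 ∧ (j : ℕ) < m) ∨
    (x ≠ 0 ∧ ((j : ℕ) = 0 ∨ (j : ℕ) = x ∨ (m ≤ (j : ℕ) ∧ (j : ℕ) ≠ m - 1 + x))) := by
  simp [patternSet]

theorem card_patternSet (hn : n + 1 = 2 * m) {x : ℕ} (hx : x < m) :
    (patternSet m n x).card = m := by
  rcases eq_or_ne x 0 with rfl | hx0
  · rw [card_eq_of_forall_mem_iff_val_mem (C := range m) (by simp; omega)
      (fun j => by simp [mem_patternSet]), card_range]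
  · rw [card_eq_of_forall_mem_iff_val_mem (C := insert x (insert 0 ((Ico m n).erase (m - 1 + x))))
      (by simp; omega) (fun j => by simp [mem_patternSet]; omega)]
    rw [card_insert_of_notMem (by simp; omega), card_insert_of_notMem (by simp; omega),
      card_erase_of_mem (by simp; omega), Nat.card_Ico]
    omega
theorem card_patternSet_inter (hn : n + 1 = 2 * m) {x y : ℕ} (hx : x < m) (hy : y < m)
    (hxy : x ≠ y) :
    (patternSet m n x ∩ patternSet m n y).card = if x = 0 ∨ y = 0 then 2 else m - 2 := by
  split_ifs with h0
  · rw [card_eq_of_forall_mem_iff_val_mem (C := {0, x + y}) (by simp; omega)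
      (fun j => by simp [mem_patternSet]; omega), card_pair (by omega)]
  · rw [card_eq_of_forall_mem_iff_val_mem
      (C := insert 0 (((Ico m n).erase (m - 1 + x)).erase (m - 1 + y)))
      (by simp; omega) (fun j => by simp [mem_patternSet]; omega)]
    rw [card_insert_of_notMem (by simp; omega), card_erase_of_mem (by simp; omega),
      card_erase_of_mem (by simp; omega), Nat.card_Ico]
    omega

theorem card_patternSet_inter_inter (hn : n + 1 = 2 * m) {x y w : ℕ} (hx : x < m) (hy : y < m)
    (hw : w < m) (hxy : x ≠ y) (hxw : x ≠ w) (hyw : y ≠ w) :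
    (patternSet m n x ∩ patternSet m n y ∩ patternSet m n w).card =
      if x = 0 ∨ y = 0 ∨ w = 0 then 1 else m - 3 := by
  split_ifs with h0
  · rw [card_eq_of_forall_mem_iff_val_mem (C := {0}) (by simp; omega)
      (fun j => by simp [mem_patternSet]; omega), card_singleton]
  · rw [card_eq_of_forall_mem_iff_val_mem
      (C := insert 0 ((((Ico m n).erase (m - 1 + x)).erase (m - 1 + y)).erase (m - 1 + w)))
      (by simp; omega) (fun j => by simp [mem_patternSet]; omega)]
    rw [card_insert_of_notMem (by simp; omega), card_erase_of_mem (by simp; omega),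
      card_erase_of_mem (by simp; omega), card_erase_of_mem (by simp; omega), Nat.card_Ico]
    omega

def patternFamily (m n : ℕ) : Finset (Finset (Fin n)) := (range m).image (patternSet m n)

theorem patternSet_injOn (hn : n + 1 = 2 * m) (hm : 4 ≤ m) :
    Set.InjOn (patternSet m n) (range m : Set ℕ) := by
  intro x hx y hy hxy
  by_contra hne
  have h := card_patternSet_inter hn (mem_range.mp hx) (mem_range.mp hy) hne
  rw [hxy, inter_self, card_patternSet hn (mem_range.mp hy)] at h
  split_ifs at h <;> omega

theorem card_patternFamily (hn : n + 1 = 2 * m) (hm : 4 ≤ m) : (patternFamily m n).card = m := by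
  rw [patternFamily, card_image_of_injOn (patternSet_injOn hn hm), card_range]

theorem satisfiesPattern_patternFamily (hn : n + 1 = 2 * m) (hm : 4 ≤ m) (hme : Even m) :
    SatisfiesPattern n 3 ![0, 0, 1] (patternFamily m n) := by
  rw [Nat.even_iff] at hme
  simp only [satisfiesPattern_001_iff, patternFamily, forall_mem_image, mem_range]
  refine ⟨fun x hx => ?_, fun x hx y hy hxy => ?_, fun x hx y hy w hw hxy hxw hyw => ?_⟩
  · rw [card_patternSet hn hx, Nat.even_iff]
    exact hme
  · rw [card_patternSet_inter hn hx hy (ne_of_apply_ne _ hxy), Nat.even_iff]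
    split_ifs <;> omega
  · rw [card_patternSet_inter_inter hn hx hy hw (ne_of_apply_ne _ hxy) (ne_of_apply_ne _ hxw)
      (ne_of_apply_ne _ hyw), Nat.odd_iff]
    split_ifs <;> omega

end Construction

theorem f_001_mod4_3 (n : ℕ) (h4 : n % 4 = 3) (h7 : 7 ≤ n) :
    maxPattern 3 ![0, 0, 1] n = (n + 1) / 2 := by
  have hn : n + 1 = 2 * ((n + 1) / 2) := by omega
  refine IsGreatest.csSup_eq ⟨⟨patternFamily _ n,
    satisfiesPattern_patternFamily hn (by omega) (Nat.even_iff.mpr (by omega)),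
    card_patternFamily hn (by omega)⟩, ?_⟩
  rintro _ ⟨F, hF, rfl⟩
  have := hF.card_le (by omega)
  omega
end

section
/- (Trace Lemma) Let α = (α_1,…,α_k) ∈ F_2^k and let β = (α_{t+1},…,α_{t+r}) ∈ F_2^r, where t ≥ 0, r ≥ 2, t + r ≤ k, f_α(n) > k, and α_{t+1} ≠ α_{t+2}. Then f_α(n) ≤ f_β(n) + t. -/
open Finset

theorem le_maxPattern {n k : ℕ} {α : Fin k → ZMod 2} {F : Finset (Finset (Fin n))}
    (hF : SatisfiesPattern n k α F) : F.card ≤ maxPattern k α n :=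
  le_csSup ⟨Fintype.card (Finset (Fin n)), fun _ ⟨G, _, hG⟩ => hG ▸ G.card_le_univ⟩ ⟨F, hF, rfl⟩

theorem maxPattern_le {n k m : ℕ} {α : Fin k → ZMod 2}
    (h : ∀ F : Finset (Finset (Fin n)), SatisfiesPattern n k α F → F.card ≤ m) :
    maxPattern k α n ≤ m :=
  csSup_le' fun _ ⟨F, hF, hm⟩ => hm ▸ h F hF

theorem Finset.inf_image_inf_right {β : Type*} [SemilatticeInf β] [OrderTop β] [DecidableEq β]
    {s : Finset β} (hs : s.Nonempty) (d : β) :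
    (s.image (· ⊓ d)).inf id = s.inf id ⊓ d := by
  rw [inf_image]
  change s.inf (id ⊓ fun _ => d) = _
  rw [inf_inf, inf_const hs]

section Trace

variable {n k : ℕ} {α : Fin k → ZMod 2} {F T : Finset (Finset (Fin n))} {t : ℕ}

def traceFamily (F T : Finset (Finset (Fin n))) : Finset (Finset (Fin n)) :=
  (F \ T).image (· ∩ T.inf id)

theorem SatisfiesPattern.injOn_inter_inf (hF : SatisfiesPattern n k α F) (hTF : T ⊆ F)
    (hT : T.card = t) (ht : t + 1 < k) (hne : α ⟨t, by omega⟩ ≠ α ⟨t + 1, ht⟩) :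
    Set.InjOn (· ∩ T.inf id) (F \ T : Finset (Finset (Fin n))) := by
  intro A hA B hB hAB
  simp only [coe_sdiff, Set.mem_sdiff, mem_coe] at hA hB hAB
  by_contra hne'
  have hB' : B ∉ insert A T := by simp [Ne.symm hne', hB.2]
  have h₁ := hF ⟨t, by omega⟩ (insert A T) (insert_subset hA.1 hTF)
    (by rw [card_insert_of_notMem hA.2, hT])
  have h₂ := hF ⟨t + 1, ht⟩ (insert B (insert A T)) (insert_subset hB.1 (insert_subset hA.1 hTF))
    (by rw [card_insert_of_notMem hB', card_insert_of_notMem hA.2, hT])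
  have hinf : (insert B (insert A T)).inf id = (insert A T).inf id := by
    simp only [inf_insert, id_eq, inf_eq_inter]
    rw [hAB, ← inter_assoc, inter_self]
  exact hne (h₁.symm.trans (hinf ▸ h₂))

theorem card_traceFamily (hTF : T ⊆ F) (hT : T.card = t)
    (hinj : Set.InjOn (· ∩ T.inf id) (F \ T : Finset (Finset (Fin n)))) :
    (traceFamily F T).card = F.card - t := by
  rw [traceFamily, card_image_of_injOn hinj, card_sdiff_of_subset hTF, hT]

theorem SatisfiesPattern.traceFamily {r : ℕ} {β : Fin r → ZMod 2}
    (hF : SatisfiesPattern n k α F) (hTF : T ⊆ F) (hT : T.card = t) (htr : t + r ≤ k)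
    (hβ : ∀ j : Fin r, β j = α ⟨t + j.val, by have := j.isLt; omega⟩)
    (hinj : Set.InjOn (· ∩ T.inf id) (F \ T : Finset (Finset (Fin n)))) :
    SatisfiesPattern n r β (traceFamily F T) := by
  intro j S hS hcard
  obtain ⟨S', hS'F, rfl⟩ := subset_image_iff.mp hS
  have hS'card : S'.card = j.val + 1 := by
    rwa [card_image_of_injOn (hinj.mono (by exact_mod_cast hS'F))] at hcard
  have hinf : (S'.image (· ∩ T.inf id)).inf id = (S' ∪ T).inf id := by
    rw [inf_union]
    exact inf_image_inf_right (card_pos.mp (by omega)) _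
  have hunion : (S' ∪ T).card = t + j.val + 1 := by
    rw [card_union_of_disjoint (disjoint_of_subset_left hS'F sdiff_disjoint), hS'card, hT]
    omega
  rw [hinf, hβ, hF ⟨t + j.val, by omega⟩ _ (union_subset (hS'F.trans sdiff_subset) hTF) hunion]

end Trace

/-- Trace Lemma. -/
theorem trace_lemma (n k t r : ℕ) (hr : 2 ≤ r) (htr : t + r ≤ k)
    (α : Fin k → ZMod 2) (β : Fin r → ZMod 2)
    (hβ : ∀ j : Fin r, β j = α ⟨t + j.val, by have := j.isLt; omega⟩)
    (hne : α ⟨t, by omega⟩ ≠ α ⟨t + 1, by omega⟩) :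
    maxPattern k α n ≤ maxPattern r β n + t := by
  refine maxPattern_le fun F hF => ?_
  rcases le_or_gt F.card t with hFt | htF
  · omega
  obtain ⟨T, hTF, hT⟩ := exists_subset_card_eq htF.le
  have hinj := hF.injOn_inter_inf hTF hT (by omega) hne
  have htrace := le_maxPattern (hF.traceFamily hTF hT htr hβ hinj)
  rw [card_traceFamily hTF hT hinj] at htrace
  omega
end

section
/- (Partition Sum Lemma) Let α = (α_1,…,α_k) and β = (β_1,…,β_k) be vectors in F_2^k and let γ = α + β (coordinatewise sum over F_2). Then for any r with 1 ≤ r ≤ n−1 such that f_α(r) > k and f_β(n−r) > k, we have f_γ(n) ≥ min{f_α(r), f_β(n−r)}. -/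
open Finset

/-!
Pair off families of size `min (f_α(r)) (f_β(n-r))` on `[r]` and on `[n-r]` and put each pair
side by side as one subset of `[n]`. An intersection of such juxtaposed sets is the
juxtaposition of the intersections, so intersection sizes add and the new family has
pattern `α + β`.
-/

lemma Finset.exists_injective_fin_mem {α : Type*} {s : Finset α} {m : ℕ} (h : m ≤ #s) :
    ∃ f : Fin m → α, Function.Injective f ∧ ∀ i, f i ∈ s :=
  ⟨fun i => (s.equivFin.symm (Fin.castLE h i)).1,
    Subtype.val_injective.comp (s.equivFin.symm.injective.comp (Fin.castLE_injective h)),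
    fun _ => (s.equivFin.symm _).2⟩

section Append

variable {a b : ℕ}

def finsetAppend (s : Finset (Fin a)) (t : Finset (Fin b)) : Finset (Fin (a + b)) :=
  (s.disjSum t).map finSumFinEquiv.toEmbedding

lemma card_finsetAppend (s : Finset (Fin a)) (t : Finset (Fin b)) :
    #(finsetAppend s t) = #s + #t := by
  rw [finsetAppend, card_map, card_disjSum]

lemma injective_finsetAppend_of_left {ι : Type*} {f : ι → Finset (Fin a)}
    (hf : Function.Injective f) (g : ι → Finset (Fin b)) :
    Function.Injective fun i => finsetAppend (f i) (g i) :=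
  fun _ _ h => hf (disjSum_inj.mp (map_injective _ h)).1

lemma finsetAppend_univ : finsetAppend (univ : Finset (Fin a)) (univ : Finset (Fin b)) = univ := by
  rw [finsetAppend, univ_disjSum_univ, map_univ_equiv]

lemma finsetAppend_inter (s s' : Finset (Fin a)) (t t' : Finset (Fin b)) :
    finsetAppend (s ∩ s') (t ∩ t') = finsetAppend s t ∩ finsetAppend s' t' := by
  rw [finsetAppend, finsetAppend, finsetAppend, ← map_inter]
  congr 1
  ext (x | x) <;> simp

lemma inf_finsetAppend {ι : Type*} [DecidableEq ι] (T : Finset ι) (f : ι → Finset (Fin a))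
    (g : ι → Finset (Fin b)) :
    T.inf (fun i => finsetAppend (f i) (g i)) = finsetAppend (T.inf f) (T.inf g) := by
  induction T using Finset.induction_on with
  | empty => exact finsetAppend_univ.symm
  | insert i T _ ih => rw [inf_insert, inf_insert, inf_insert, ih, inf_eq_inter, inf_eq_inter,
      inf_eq_inter, finsetAppend_inter]

end Append

section Pattern

variable {n k : ℕ} {α : Fin k → ZMod 2}

lemma SatisfiesPattern.mono {F G : Finset (Finset (Fin n))} (hF : SatisfiesPattern n k α F)
    (hGF : G ⊆ F) : SatisfiesPattern n k α G :=
  fun i S hS => hF i S (hS.trans hGF)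

lemma satisfiesPattern_image_iff {ι : Type*} [Fintype ι] [DecidableEq ι]
    {f : ι → Finset (Fin n)} (hf : Function.Injective f) :
    SatisfiesPattern n k α (univ.image f) ↔
      ∀ i : Fin k, ∀ T : Finset ι, #T = i.val + 1 → (#(T.inf f) : ZMod 2) = α i := by
  constructor
  · intro h i T hT
    have := h i (T.image f) (image_subset_image (subset_univ T))
      (by rw [card_image_of_injective _ hf, hT])
    rwa [inf_image, Function.id_comp] at this
  · rintro h i S hS hcard
    obtain ⟨T, -, rfl⟩ := subset_image_iff.mp hS
    rw [card_image_of_injective _ hf] at hcard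
    rw [inf_image, Function.id_comp]
    exact h i T hcard

lemma bddAbove_card_satisfiesPattern (n k : ℕ) (α : Fin k → ZMod 2) :
    BddAbove {m : ℕ | ∃ F : Finset (Finset (Fin n)), SatisfiesPattern n k α F ∧ F.card = m} :=
  ⟨Fintype.card (Finset (Fin n)), by rintro m ⟨F, -, rfl⟩; exact card_le_univ F⟩

lemma SatisfiesPattern.card_le_maxPattern {F : Finset (Finset (Fin n))}
    (hF : SatisfiesPattern n k α F) : #F ≤ maxPattern k α n :=
  le_csSup (bddAbove_card_satisfiesPattern n k α) ⟨F, hF, rfl⟩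

lemma exists_satisfiesPattern_card_eq_maxPattern (k : ℕ) (α : Fin k → ZMod 2) (n : ℕ) :
    ∃ F : Finset (Finset (Fin n)), SatisfiesPattern n k α F ∧ #F = maxPattern k α n := by
  refine Nat.sSup_mem ?_ (bddAbove_card_satisfiesPattern n k α)
  exact ⟨0, ∅, fun _ S hS hcard => by simp [subset_empty.mp hS] at hcard, rfl⟩

end Pattern

lemma satisfiesPattern_image_finsetAppend {a b k : ℕ} {α β : Fin k → ZMod 2} {ι : Type*}
    [Fintype ι] [DecidableEq ι] {f : ι → Finset (Fin a)} {g : ι → Finset (Fin b)}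
    (hf : Function.Injective f) (hg : Function.Injective g)
    (hα : SatisfiesPattern a k α (univ.image f)) (hβ : SatisfiesPattern b k β (univ.image g)) :
    SatisfiesPattern (a + b) k (α + β) (univ.image fun i => finsetAppend (f i) (g i)) := by
  rw [satisfiesPattern_image_iff hf] at hα
  rw [satisfiesPattern_image_iff hg] at hβ
  rw [satisfiesPattern_image_iff (injective_finsetAppend_of_left hf g)]
  intro i T hT
  rw [inf_finsetAppend, card_finsetAppend, Nat.cast_add, hα i T hT, hβ i T hT, Pi.add_apply]

theorem min_maxPattern_le_maxPattern_add (k : ℕ) (α β : Fin k → ZMod 2) (a b : ℕ) :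
    min (maxPattern k α a) (maxPattern k β b) ≤ maxPattern k (α + β) (a + b) := by
  set m := min (maxPattern k α a) (maxPattern k β b)
  obtain ⟨A, hA, hAcard⟩ := exists_satisfiesPattern_card_eq_maxPattern k α a
  obtain ⟨B, hB, hBcard⟩ := exists_satisfiesPattern_card_eq_maxPattern k β b
  obtain ⟨f, hf, hfA⟩ := exists_injective_fin_mem (hAcard ▸ min_le_left _ _ : m ≤ #A)
  obtain ⟨g, hg, hgB⟩ := exists_injective_fin_mem (hBcard ▸ min_le_right _ _ : m ≤ #B)
  have hF := satisfiesPattern_image_finsetAppend hf hg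
    (hA.mono (image_subset_iff.mpr fun i _ => hfA i))
    (hB.mono (image_subset_iff.mpr fun i _ => hgB i))
  calc m = #(univ.image fun i => finsetAppend (f i) (g i)) := by
        rw [card_image_of_injective _ (injective_finsetAppend_of_left hf g), card_univ,
          Fintype.card_fin]
    _ ≤ maxPattern k (α + β) (a + b) := hF.card_le_maxPattern

theorem partition_sum_lemma_general (n k r : ℕ) (α β : Fin k → ZMod 2)
    (hrn : r ≤ n - 1) :
    min (maxPattern k α r) (maxPattern k β (n - r)) ≤
      maxPattern k (fun i => α i + β i) n := by
  obtain ⟨d, rfl⟩ := Nat.exists_eq_add_of_le (show r ≤ n by omega)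
  rw [Nat.add_sub_cancel_left]
  exact min_maxPattern_le_maxPattern_add k α β r d

/-- Partition Sum Lemma. -/
theorem partition_sum_lemma (n k r : ℕ) (α β : Fin k → ZMod 2)
    (hr1 : 1 ≤ r) (hrn : r ≤ n - 1)
    (hα : k < maxPattern k α r) (hβ : k < maxPattern k β (n - r)) :
    min (maxPattern k α r) (maxPattern k β (n - r)) ≤
      maxPattern k (fun i => α i + β i) n :=
  partition_sum_lemma_general n k r α β hrn
end

section
/- For every n ≥ 2, the maximum size of a family of subsets of [n] satisfying the (0,1,1)-intersection pattern modulo 2 equals n − 1; that is, f_{(0,1,1)}(n) = n − 1. -/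
open Finset

/-!
Upper bound: the indicator vectors `v_A ∈ 𝔽₂ⁿ` of the members of `F` all lie in the hyperplane
`{x | ∑ xᵢ = 0}`, and their Gram matrix is `J - I`. If `∑ g_A v_A = 0`, pairing with `v_B * v_C`
for two fixed members `B ≠ C` (every triple and pair intersection is odd) gives `∑ g_A = 0`, and
pairing with `v_A` then gives `g_A = ∑ g - g_A = 0`. So `|F| ≤ n - 1`.

Lower bound: the `n - 1` two-element sets `{i, e}`, `i ≠ e`, pairwise meet in `{e}`.
-/

namespace IntersectionPattern

section LinearAlgebra

variable {R : Type*} [CommRing R] {m ι : Type*} [Fintype m] [Fintype ι]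

theorem linearIndependent_of_dotProduct_eq [DecidableEq ι] {v : ι → m → R} (w : m → R)
    (hself : ∀ i, v i ⬝ᵥ v i = 0) (hpair : Pairwise fun i j => v i ⬝ᵥ v j = 1)
    (hw : ∀ i, v i ⬝ᵥ w = 1) : LinearIndependent R v := by
  rw [Fintype.linearIndependent_iff]
  intro g hg j
  have hgram : ∀ i, v i ⬝ᵥ v j = 1 - if i = j then 1 else 0 := by
    intro i
    split_ifs with hij
    · rw [hij, hself, sub_self]
    · rw [hpair hij, sub_zero]
  have hsum : ∑ i, g i = 0 := by
    simpa [sum_dotProduct, hw] using congrArg (· ⬝ᵥ w) hg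
  have hj : ∑ i, g i - g j = 0 := by
    simpa [sum_dotProduct, hgram, mul_sub] using congrArg (· ⬝ᵥ v j) hg
  rwa [hsum, zero_sub, neg_eq_zero] at hj

end LinearAlgebra

theorem card_add_one_le_finrank_of_apply_eq_zero {K V ι : Type*} [Field K] [AddCommGroup V] [Module K V]
    [FiniteDimensional K V] [Fintype ι] {v : ι → V} (hv : LinearIndependent K v)
    {f : Module.Dual K V} (hf : f ≠ 0) (hvf : ∀ i, f (v i) = 0) :
    Fintype.card ι + 1 ≤ Module.finrank K V := by
  have hspan : Submodule.span K (Set.range v) ≤ LinearMap.ker f :=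
    Submodule.span_le.2 (Set.range_subset_iff.2 hvf)
  rw [← finrank_span_eq_card hv, ← f.finrank_ker_add_one_of_ne_zero hf]
  exact Nat.add_le_add_right (Submodule.finrank_mono hspan) 1

section Indicator

variable {α : Type*} [DecidableEq α] (R : Type*)

def indicatorVec [Zero R] [One R] (A : Finset α) : α → R := fun x => if x ∈ A then 1 else 0

theorem indicatorVec_inter [MulZeroOneClass R] (A B : Finset α) :
    indicatorVec R (A ∩ B) = indicatorVec R A * indicatorVec R B := by
  ext x
  by_cases hA : x ∈ A <;> by_cases hB : x ∈ B <;> simp [indicatorVec, hA, hB]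

theorem indicatorVec_univ [Fintype α] [Zero R] [One R] : indicatorVec R (univ : Finset α) = 1 := by
  ext x
  simp [indicatorVec]

theorem indicatorVec_dotProduct [Fintype α] [NonAssocSemiring R] (A B : Finset α) :
    indicatorVec R A ⬝ᵥ indicatorVec R B = #(A ∩ B) := by
  calc indicatorVec R A ⬝ᵥ indicatorVec R B = ∑ x, indicatorVec R (A ∩ B) x := by
        simp only [dotProduct, indicatorVec_inter, Pi.mul_apply]
    _ = #(A ∩ B) := by simp [indicatorVec, -mem_inter]

end Indicator

section Pattern

variable {n : ℕ} {F : Finset (Finset (Fin n))} (hF : SatisfiesPattern n 3 ![0, 1, 1] F)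
include hF

theorem card_even {A : Finset (Fin n)} (hA : A ∈ F) : (#A : ZMod 2) = 0 := by
  simpa using hF 0 {A} (by simpa using hA) rfl

theorem card_inter_odd {A B : Finset (Fin n)} (hA : A ∈ F) (hB : B ∈ F) (hAB : A ≠ B) :
    (#(A ∩ B) : ZMod 2) = 1 := by
  simpa using hF 1 {A, B} (by simp [insert_subset_iff, hA, hB]) (card_pair hAB)

theorem card_inter_inter_odd {A B C : Finset (Fin n)} (hA : A ∈ F) (hB : B ∈ F) (hC : C ∈ F)
    (hAB : A ≠ B) (hAC : A ≠ C) (hBC : B ≠ C) : (#(A ∩ (B ∩ C)) : ZMod 2) = 1 := by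
  simpa using hF 2 {A, B, C} (by simp [insert_subset_iff, hA, hB, hC])
    (by rw [card_insert_of_notMem (by simp [hAB, hAC]), card_pair hBC]; rfl)

theorem linearIndependent_indicatorVec {B C : Finset (Fin n)} (hB : B ∈ F) (hC : C ∈ F)
    (hBC : B ≠ C) : LinearIndependent (ZMod 2) fun A : F => indicatorVec (ZMod 2) A.1 := by
  refine linearIndependent_of_dotProduct_eq (indicatorVec (ZMod 2) (B ∩ C)) ?_ ?_ ?_
  · intro A
    simpa [indicatorVec_dotProduct] using card_even hF A.2
  · intro A A' hAA'
    simpa [indicatorVec_dotProduct] using card_inter_odd hF A.2 A'.2 (Subtype.coe_ne_coe.2 hAA')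
  · rintro ⟨A, hA⟩
    simp only [indicatorVec_dotProduct]
    by_cases hAB : A = B
    · rw [hAB, ← inter_assoc, inter_self]
      exact card_inter_odd hF hB hC hBC
    by_cases hAC : A = C
    · rw [hAC, inter_left_comm, inter_self]
      exact card_inter_odd hF hB hC hBC
    exact card_inter_inter_odd hF hA hB hC hAB hAC hBC

theorem card_le_of_satisfiesPattern (hn : 2 ≤ n) : #F ≤ n - 1 := by
  rcases le_or_gt #F 1 with hsmall | hlarge
  · omega
  obtain ⟨B, hB, C, hC, hBC⟩ := one_lt_card.1 hlarge
  let f : Module.Dual (ZMod 2) (Fin n → ZMod 2) := dotProductBilin (ZMod 2) (ZMod 2) 1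
  have hf : f ≠ 0 := fun h => by
    simpa [f] using LinearMap.congr_fun h (Pi.single ⟨0, by omega⟩ 1)
  have hvf : ∀ A : F, f (indicatorVec (ZMod 2) A.1) = 0 := fun A => by
    simpa [f, ← indicatorVec_univ, indicatorVec_dotProduct] using card_even hF A.2
  have := card_add_one_le_finrank_of_apply_eq_zero
    (linearIndependent_indicatorVec hF hB hC hBC) hf hvf
  rw [Fintype.card_coe, Module.finrank_fin_fun] at this
  omega

end Pattern

section PairsThrough

variable {α : Type*} [Fintype α] [DecidableEq α]

def pairsThrough (e : α) : Finset (Finset α) := (univ.erase e).image fun i => {i, e}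

theorem mem_pairsThrough {e : α} {A : Finset α} : A ∈ pairsThrough e ↔ ∃ i ≠ e, {i, e} = A := by
  simp [pairsThrough]

theorem card_pairsThrough (e : α) : #(pairsThrough e) = Fintype.card α - 1 := by
  rw [pairsThrough, card_image_of_injOn, card_erase_of_mem (mem_univ e), card_univ]
  intro i hi j _ hij
  have : i ∈ ({j, e} : Finset α) := by
    rw [← show ({i, e} : Finset α) = {j, e} from hij]
    exact mem_insert_self i {e}
  simpa [(mem_erase.1 hi).1] using this

theorem inter_eq_of_mem_pairsThrough {e : α} {A B : Finset α} (hA : A ∈ pairsThrough e) (hB : B ∈ pairsThrough e)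
    (hAB : A ≠ B) : A ∩ B = {e} := by
  obtain ⟨i, -, rfl⟩ := mem_pairsThrough.1 hA
  obtain ⟨j, -, rfl⟩ := mem_pairsThrough.1 hB
  have hij : i ≠ j := fun h => hAB (h ▸ rfl)
  ext x
  simp only [mem_inter, mem_insert, mem_singleton]
  constructor
  · rintro ⟨hx | hx, hx' | hx'⟩ <;> simp_all
  · rintro rfl
    simp

theorem inf_eq_singleton_of_subset_pairsThrough {e : α} {S : Finset (Finset α)} (hS : S ⊆ pairsThrough e)
    (hcard : 1 < #S) : S.inf id = {e} := by
  obtain ⟨A, hA, B, hB, hAB⟩ := one_lt_card.1 hcard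
  refine le_antisymm ?_ (Finset.le_inf fun C hC => ?_)
  · rw [← inter_eq_of_mem_pairsThrough (hS hA) (hS hB) hAB]
    exact _root_.le_inf (Finset.inf_le hA) (Finset.inf_le hB)
  · obtain ⟨i, -, rfl⟩ := mem_pairsThrough.1 (hS hC)
    simp

end PairsThrough

theorem satisfiesPattern_pairsThrough {n : ℕ} (e : Fin n) : SatisfiesPattern n 3 ![0, 1, 1] (pairsThrough e) := by
  intro k S hS hcard
  fin_cases k
  · obtain ⟨A, rfl⟩ := card_eq_one.1 hcard
    obtain ⟨i, hi, rfl⟩ := mem_pairsThrough.1 (hS (mem_singleton_self A))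
    rw [inf_singleton, id, card_pair hi]
    rfl
  all_goals
    rw [inf_eq_singleton_of_subset_pairsThrough hS (by simp [hcard])]
    rfl

end IntersectionPattern

theorem f_011 (n : ℕ) (hn : 2 ≤ n) :
    maxPattern 3 ![0, 1, 1] n = n - 1 := by
  open IntersectionPattern in
  refine IsGreatest.csSup_eq ⟨?_, ?_⟩
  · let e : Fin n := ⟨0, by omega⟩
    exact ⟨pairsThrough e, satisfiesPattern_pairsThrough e, by rw [card_pairsThrough, Fintype.card_fin]⟩
  · rintro m ⟨F, hF, rfl⟩
    exact card_le_of_satisfiesPattern hF hn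
end

section
/- (Dual eventown) For every n ≥ 1, the maximum size of a family of subsets of [n] satisfying the (1,1)-intersection pattern modulo 2 (all sets have odd size and all pairwise intersections of distinct sets have odd size) equals 2^{(n−1)/2} when n is odd and 2^{(n−2)/2} when n is even; that is, f_{(1,1)}(n) = 2^{⌊(n−1)/2⌋}. -/
open Finset

/-!
Upper bound: the indicator vectors of the family form a set `S ⊆ 𝔽₂ⁿ` with `x ⬝ᵥ y = 1` for all
`x, y ∈ S`. Fixing `x₀ ∈ S`, the differences `x - x₀` span a subspace `W` orthogonal to all of
`span S`, and `x₀ ∈ span S \ W`. Hence `dim W + (dim W + 1) ≤ n`, and `S ⊆ x₀ + W` has at most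
`2 ^ dim W ≤ 2 ^ ((n - 1) / 2)` elements.

Lower bound: with `m = (n - 1) / 2`, the `2 ^ m` sets `{∗} ∪ (T × {0, 1})` for `T ⊆ [m]` live in a
ground set of size `2m + 1 ≤ n`, and any two of them meet in `2 |T ∩ T'| + 1` points.
-/

namespace DualEventown

open Module LinearMap.BilinForm

section LinearAlgebra

variable {K V : Type*} [Field K] [AddCommGroup V] [Module K V] {B : LinearMap.BilinForm K V}

lemma finrank_add_finrank_le_of_le_orthogonal [FiniteDimensional K V] (hB : B.Nondegenerate)
    {W U : Submodule K V} (h : W ≤ B.orthogonal U) : finrank K W + finrank K U ≤ finrank K V := by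
  have hW := Submodule.finrank_mono h
  rw [finrank_orthogonal hB] at hW
  have hU := Submodule.finrank_le U
  omega

lemma span_sub_le_orthogonal_span {S : Set V} {x₀ : V} (hx₀ : x₀ ∈ S)
    (hS : ∀ x ∈ S, ∀ y ∈ S, B x y = 1) :
    Submodule.span K ((· - x₀) '' S) ≤ B.orthogonal (Submodule.span K S) := by
  rw [Submodule.span_le]
  rintro _ ⟨y, hy, rfl⟩ u hu
  suffices Submodule.span K S ≤ LinearMap.ker (B.flip (y - x₀)) from this hu
  rw [Submodule.span_le]
  intro x hx
  simp [hS x hx y hy, hS x hx x₀ hx₀]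

theorem card_le_of_forall_apply_eq_one [Finite K] [FiniteDimensional K V] (hB : B.Nondegenerate)
    (S : Finset V) (hS : ∀ x ∈ S, ∀ y ∈ S, B x y = 1) :
    #S ≤ Nat.card K ^ ((finrank K V - 1) / 2) := by
  classical
  obtain rfl | ⟨x₀, hx₀⟩ := S.eq_empty_or_nonempty
  · simp
  set W := Submodule.span K ((· - x₀) '' (S : Set V))
  have hperp : W ≤ B.orthogonal (Submodule.span K S) := span_sub_le_orthogonal_span hx₀ hS
  have hx₀W : x₀ ∉ W := fun h => by
    have h₀ : B x₀ x₀ = 0 := hperp h x₀ (Submodule.subset_span hx₀)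
    exact one_ne_zero ((hS x₀ hx₀ x₀ hx₀).symm.trans h₀)
  have hlt : W < Submodule.span K S := by
    refine SetLike.lt_iff_le_and_exists.mpr
      ⟨Submodule.span_le.mpr ?_, x₀, Submodule.subset_span hx₀, hx₀W⟩
    rintro _ ⟨y, hy, rfl⟩
    exact sub_mem (Submodule.subset_span hy) (Submodule.subset_span hx₀)
  have hdim : finrank K W ≤ (finrank K V - 1) / 2 := by
    have := finrank_add_finrank_le_of_le_orthogonal hB hperp
    have := Submodule.finrank_lt_finrank_of_lt hlt
    omega
  have : Finite V := Module.finite_of_finite K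
  calc #S = #(S.image (· - x₀)) := (card_image_of_injective _ sub_left_injective).symm
    _ ≤ Nat.card W := by
      rw [← Set.ncard_coe_finset, ← Nat.card_coe_set_eq, coe_image]
      exact Nat.card_mono (Set.toFinite _) Submodule.subset_span
    _ = Nat.card K ^ finrank K W := natCard_eq_pow_finrank
    _ ≤ Nat.card K ^ ((finrank K V - 1) / 2) := Nat.pow_le_pow_right Nat.card_pos hdim

end LinearAlgebra

section Families

variable {ι : Type*} [Fintype ι]

lemma dotProductBilin_nondegenerate (K : Type*) [Field K] :
    (dotProductBilin K K : LinearMap.BilinForm K (ι → K)).Nondegenerate := by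
  classical
  refine ⟨fun x h => dotProduct_eq_zero x h, fun y h => ?_⟩
  exact dotProduct_eq_zero y fun x => by rw [dotProduct_comm]; exact h x

lemma indicator_dotProduct_indicator [DecidableEq ι] {R : Type*} [NonAssocSemiring R]
    (A C : Finset ι) :
    (A : Set ι).indicator 1 ⬝ᵥ (C : Set ι).indicator (1 : ι → R) = #(A ∩ C) := by
  simp only [dotProduct, Set.indicator_apply, mem_coe, Pi.one_apply, mul_ite, mul_one, mul_zero,
    ← ite_and, sum_boole]
  congr 2
  ext
  simp [and_comm]

theorem card_le_of_forall_card_inter_eq_one [DecidableEq ι] (F : Finset (Finset ι))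
    (hF : ∀ A ∈ F, ∀ C ∈ F, (#(A ∩ C) : ZMod 2) = 1) :
    #F ≤ 2 ^ ((Fintype.card ι - 1) / 2) := by
  have hinj : Function.Injective fun A : Finset ι => (A : Set ι).indicator (1 : ι → ZMod 2) :=
    fun A C h => coe_injective (Set.indicator_one_inj (ZMod 2) h)
  have := card_le_of_forall_apply_eq_one (dotProductBilin_nondegenerate (ZMod 2))
    (F.image fun A : Finset ι => (A : Set ι).indicator 1) (by
      simp only [mem_image]
      rintro _ ⟨A, hA, rfl⟩ _ ⟨C, hC, rfl⟩
      simpa [indicator_dotProduct_indicator] using hF A hA C hC)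
  rwa [card_image_of_injective _ hinj, Nat.card_zmod, finrank_fintype_fun_eq_card] at this

end Families

section Construction

variable {β : Type*}

def oddSet (T : Finset β) : Finset (Option (β × Fin 2)) := insertNone (T ×ˢ univ)

lemma oddSet_inter [DecidableEq β] (T T' : Finset β) : oddSet T ∩ oddSet T' = oddSet (T ∩ T') := by
  ext (_ | ⟨b, j⟩) <;> simp [oddSet]

lemma card_oddSet (T : Finset β) : #(oddSet T) = 2 * #T + 1 := by
  simp [oddSet, card_insertNone, card_product, mul_comm]

lemma oddSet_injective : Function.Injective (oddSet (β := β)) := fun T T' h => by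
  ext b
  simpa [oddSet] using congrArg (some (b, 0) ∈ ·) h

end Construction

lemma satisfiesPattern_one_one_iff {n : ℕ} {F : Finset (Finset (Fin n))} :
    SatisfiesPattern n 2 ![1, 1] F ↔ ∀ A ∈ F, ∀ C ∈ F, (#(A ∩ C) : ZMod 2) = 1 := by
  refine ⟨fun hF A hA C hC => ?_, fun hF i S hS hcard => ?_⟩
  · obtain rfl | hAC := eq_or_ne A C
    · simpa using hF 0 {A} (singleton_subset_iff.mpr hA) rfl
    · simpa using hF 1 {A, C} (insert_subset hA (singleton_subset_iff.mpr hC)) (card_pair hAC)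
  · fin_cases i
    · obtain ⟨A, rfl⟩ := card_eq_one.mp hcard
      simpa using hF A (hS (mem_singleton_self A)) A (hS (mem_singleton_self A))
    · obtain ⟨A, C, -, rfl⟩ := card_eq_two.mp hcard
      simpa using hF A (hS (mem_insert_self A _)) C (hS (mem_insert_of_mem (mem_singleton_self C)))

theorem exists_satisfiesPattern_one_one_card_eq {n : ℕ} (hn : 1 ≤ n) :
    ∃ F : Finset (Finset (Fin n)), SatisfiesPattern n 2 ![1, 1] F ∧ #F = 2 ^ ((n - 1) / 2) := by
  obtain ⟨e⟩ : Nonempty (Option (Fin ((n - 1) / 2) × Fin 2) ↪ Fin n) :=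
    Function.Embedding.nonempty_of_card_le (by simp; omega)
  refine ⟨univ.image fun T => (oddSet T).map e, satisfiesPattern_one_one_iff.mpr ?_, ?_⟩
  · simp only [mem_image]
    rintro _ ⟨T, -, rfl⟩ _ ⟨T', -, rfl⟩
    rw [← map_inter, oddSet_inter, card_map, card_oddSet, ZMod.natCast_eq_one_iff_odd]
    exact odd_two_mul_add_one _
  · rw [card_image_of_injective _ fun T T' h => oddSet_injective (map_injective e h), card_univ,
      Fintype.card_finset, Fintype.card_fin]

end DualEventown

/-- Dual eventown. -/
theorem f_11 (n : ℕ) (hn : 1 ≤ n) :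
    maxPattern 2 ![1, 1] n = 2 ^ ((n - 1) / 2) := by
  refine IsGreatest.csSup_eq ⟨DualEventown.exists_satisfiesPattern_one_one_card_eq hn, ?_⟩
  rintro _ ⟨F, hF, rfl⟩
  simpa using DualEventown.card_le_of_forall_card_inter_eq_one F
    (DualEventown.satisfiesPattern_one_one_iff.mp hF)
end

section
/- For every n ≥ 1, the maximum size of a family of subsets of [n] satisfying the (1,1,1)-intersection pattern modulo 2 equals 2^{(n−1)/2} when n is odd and 2^{(n−2)/2} when n is even; that is, f_{(1,1,1)}(n) = 2^{⌊(n−1)/2⌋}. -/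
open Finset

/-!
Read a set `A ⊆ [n]` as its indicator vector `χ_A ∈ 𝔽₂ⁿ`, so that `|A ∩ B| mod 2` is the dot
product `χ_A ⬝ χ_B`. If all intersections of at most two members of `F` are odd, fix `A₀ ∈ F`:
the differences `χ_A - χ_{A₀}` span a totally isotropic subspace `W` orthogonal to `χ_{A₀}`,
while `χ_{A₀} ⬝ χ_{A₀} = 1`. Hence `W` is orthogonal to the strictly larger space
`W ⊕ ⟨χ_{A₀}⟩`, so `2 dim W + 1 ≤ n` and `|F| ≤ |W| ≤ 2 ^ ⌊(n - 1) / 2⌋`.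

Conversely, take a point `x₀` and `m = ⌊(n - 1) / 2⌋` disjoint pairs avoiding it. The `2 ^ m`
sets `{x₀} ∪ (a union of pairs)` have odd size and are closed under intersection, so every
intersection of any number of them is odd.
-/

open Module

namespace LinearMap.BilinForm

variable {K V : Type*} [Field K] [AddCommGroup V] [Module K V] {B : LinearMap.BilinForm K V}

theorem span_le_orthogonal_span {s t : Set V} (h : ∀ x ∈ s, ∀ y ∈ t, B x y = 0) :
    Submodule.span K t ≤ B.orthogonal (Submodule.span K s) := by
  refine Submodule.span_le.2 fun y hy x hx => ?_
  have : Submodule.span K s ≤ LinearMap.ker (B.flip y) :=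
    Submodule.span_le.2 fun x' hx' => h x' hx' y hy
  exact this hx

variable [FiniteDimensional K V]

theorem two_mul_finrank_add_one_le (hB : B.Nondegenerate) {W : Submodule K V}
    (hW : W ≤ B.orthogonal W) {v : V} (hvW : W ≤ B.orthogonal (K ∙ v)) (hv : B v v ≠ 0) :
    2 * finrank K W + 1 ≤ finrank K V := by
  have hv_notMem : v ∉ W := fun h => hv (hvW h v (Submodule.mem_span_singleton_self v))
  have hlt : finrank K W < finrank K ↥(W ⊔ (K ∙ v)) :=
    Submodule.finrank_lt_finrank_of_lt <| lt_of_le_of_ne le_sup_left fun h => hv_notMem <|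
      h ▸ Submodule.mem_sup_right (Submodule.mem_span_singleton_self v)
  have hW_orth : W ≤ B.orthogonal (W ⊔ (K ∙ v)) := by
    intro x hx u hu
    obtain ⟨y, hy, z, hz, rfl⟩ := Submodule.mem_sup.1 hu
    obtain ⟨c, rfl⟩ := Submodule.mem_span_singleton.1 hz
    have hyx : B y x = 0 := hW hx y hy
    have hvx : B v x = 0 := hvW hx v (Submodule.mem_span_singleton_self v)
    simp [hyx, hvx]
  have := Submodule.finrank_mono hW_orth
  rw [finrank_orthogonal hB] at this
  have := Submodule.finrank_le (W ⊔ (K ∙ v))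
  omega

theorem card_le_of_forall_apply_eq_one [Fintype K] (hB : B.Nondegenerate) (S : Finset V)
    (hS : ∀ u ∈ S, ∀ w ∈ S, B u w = 1) :
    #S ≤ Fintype.card K ^ ((finrank K V - 1) / 2) := by
  rcases S.eq_empty_or_nonempty with rfl | ⟨u₀, hu₀⟩
  · simp
  set W := Submodule.span K ((· - u₀) '' (S : Set V))
  -- `B (u - u₀) (w - u₀) = 1 - 1 - 1 + 1` and `B u₀ (w - u₀) = 1 - 1`
  have hW : W ≤ B.orthogonal W := by
    refine span_le_orthogonal_span ?_
    rintro _ ⟨u, hu, rfl⟩ _ ⟨w, hw, rfl⟩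
    simp [hS u hu w hw, hS u hu u₀ hu₀, hS u₀ hu₀ w hw, hS u₀ hu₀ u₀ hu₀]
  have hu₀W : W ≤ B.orthogonal (K ∙ u₀) := by
    refine span_le_orthogonal_span ?_
    rintro x hx _ ⟨w, hw, rfl⟩
    rw [Set.mem_singleton_iff.1 hx]
    simp [hS u₀ hu₀ w hw, hS u₀ hu₀ u₀ hu₀]
  have hdim := two_mul_finrank_add_one_le hB hW hu₀W (by simp [hS u₀ hu₀ u₀ hu₀])
  have : Finite V := Module.finite_of_finite K
  have : Fintype W := Fintype.ofFinite W
  calc #S = Fintype.card S := (Fintype.card_coe S).symm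
    _ ≤ Fintype.card W := Fintype.card_le_of_injective
        (fun u => ⟨u - u₀, Submodule.subset_span ⟨u, u.2, rfl⟩⟩)
        fun u w h => Subtype.ext (sub_left_injective (congrArg Subtype.val h))
    _ = Fintype.card K ^ finrank K W := card_eq_pow_finrank
    _ ≤ Fintype.card K ^ ((finrank K V - 1) / 2) :=
        Nat.pow_le_pow_right Fintype.card_pos (by omega)

end LinearMap.BilinForm

theorem dotProduct_indicator_one_eq_card_inter {α R : Type*} [Fintype α] [DecidableEq α]
    [Semiring R] (A B : Finset α) :
    (A : Set α).indicator (1 : α → R) ⬝ᵥ (B : Set α).indicator 1 = (#(A ∩ B) : R) := by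
  simp [dotProduct, Set.indicator_apply, inter_comm]

theorem Finset.card_le_of_card_inter_eq_one {α : Type*} [Fintype α] [DecidableEq α]
    (F : Finset (Finset α)) (hF : ∀ A ∈ F, ∀ B ∈ F, (#(A ∩ B) : ZMod 2) = 1) :
    #F ≤ 2 ^ ((Fintype.card α - 1) / 2) := by
  let χ : Finset α → α → ZMod 2 := fun A => (A : Set α).indicator 1
  have hχ : Function.Injective χ := fun A B h => by
    exact_mod_cast Set.indicator_one_inj (M₀ := ZMod 2) h
  have hB : (Matrix.toBilin' (1 : Matrix α α (ZMod 2))).Nondegenerate :=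
    (Matrix.nondegenerate_of_det_ne_zero (by simp)).toBilin'
  have := LinearMap.BilinForm.card_le_of_forall_apply_eq_one hB (F.image χ) <| by
    simp only [mem_image, forall_exists_index, and_imp]
    rintro _ A hA rfl _ B hB rfl
    simpa [Matrix.toBilin'_apply', χ, dotProduct_indicator_one_eq_card_inter] using hF A hA B hB
  simpa [card_image_of_injective F hχ] using this

theorem SatisfiesPattern.card_inter_eq_one {n k : ℕ} {α : Fin (k + 2) → ZMod 2}
    {F : Finset (Finset (Fin n))} (hF : SatisfiesPattern n (k + 2) α F) (h₀ : α 0 = 1)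
    (h₁ : α 1 = 1) : ∀ A ∈ F, ∀ B ∈ F, (#(A ∩ B) : ZMod 2) = 1 := by
  intro A hA B hB
  obtain rfl | hAB := eq_or_ne A B
  · simpa [h₀] using hF 0 {A} (by simpa) rfl
  · simpa [h₁] using hF 1 {A, B} (by simp [insert_subset_iff, hA, hB]) (card_pair hAB)

theorem satisfiesPattern_one_of_infClosed {n k : ℕ} {F : Finset (Finset (Fin n))}
    (hF : InfClosed (F : Set (Finset (Fin n)))) (hodd : ∀ A ∈ F, Odd #A) :
    SatisfiesPattern n k (fun _ => 1) F := fun _ S hSF hS =>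
  Odd.natCast_zmod_two <| hodd _ <| hF.finsetInf_mem (card_pos.1 (by omega)) fun _ hA => hSF hA

section OddSet

variable {ι α : Type*} (e : Option (ι × Fin 2) ↪ α)

def oddSet (S : Finset ι) : Finset α := (insertNone (S ×ˢ univ)).map e

theorem oddSet_inter [DecidableEq ι] [DecidableEq α] (S T : Finset ι) :
    oddSet e S ∩ oddSet e T = oddSet e (S ∩ T) := by
  rw [oddSet, oddSet, oddSet, ← map_inter]
  congr 1
  ext (_ | ⟨i, j⟩) <;> simp [mem_insertNone]

theorem card_oddSet (S : Finset ι) : #(oddSet e S) = 2 * #S + 1 := by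
  simp [oddSet, card_insertNone, mul_comm]

theorem oddSet_injective : Function.Injective (oddSet e) := fun S T h => by
  ext i
  simpa [oddSet, mem_insertNone] using congrArg (e (some (i, 0)) ∈ ·) h

end OddSet

theorem exists_satisfiesPattern_one_card_eq_two_pow {n m : ℕ} (k : ℕ) (h : 2 * m + 1 ≤ n) :
    ∃ F : Finset (Finset (Fin n)), SatisfiesPattern n k (fun _ => 1) F ∧ #F = 2 ^ m := by
  obtain ⟨e⟩ := Function.Embedding.nonempty_of_card_le (α := Option (Fin m × Fin 2))
    (β := Fin n) (by simpa [mul_comm] using h)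
  refine ⟨univ.image (oddSet e), satisfiesPattern_one_of_infClosed ?_ ?_, ?_⟩
  · simp only [coe_image, coe_univ, Set.image_univ]
    rintro _ ⟨S, rfl⟩ _ ⟨T, rfl⟩
    exact ⟨S ∩ T, (oddSet_inter e S T).symm⟩
  · simp only [mem_image, mem_univ, true_and, forall_exists_index, forall_apply_eq_imp_iff]
    exact fun S => card_oddSet e S ▸ odd_two_mul_add_one _
  · simp [card_image_of_injective _ (oddSet_injective e)]

theorem f_111 (n : ℕ) (hn : 1 ≤ n) :
    maxPattern 3 ![1, 1, 1] n = 2 ^ ((n - 1) / 2) := by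
  have hα : (![1, 1, 1] : Fin 3 → ZMod 2) = fun _ => 1 := by
    funext i
    fin_cases i <;> rfl
  refine IsGreatest.csSup_eq ⟨?_, ?_⟩
  · obtain ⟨F, hF, hcard⟩ :=
      exists_satisfiesPattern_one_card_eq_two_pow (n := n) (m := (n - 1) / 2) 3 (by omega)
    exact ⟨F, hα ▸ hF, hcard⟩
  · rintro _ ⟨F, hF, rfl⟩
    simpa using Finset.card_le_of_card_inter_eq_one F (hF.card_inter_eq_one rfl rfl)
end

section
/- For every n ≥ 1, the maximum size of a family of subsets of [n] satisfying the (0,1,0)-intersection pattern modulo 2 equals n when n is odd and equals n − 1 when n is even; that is, f_{(0,1,0)}(n) = n for odd n and f_{(0,1,0)}(n) = n − 1 for even n. -/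
/-!
Upper bound: fix `A ∈ F`. The indicator vectors of the sets `A ∩ B`, `B ∈ F \ {A}`, in
`(A → 𝔽₂)` are orthonormal for the dot product, because `|A ∩ B|` is odd and
`|A ∩ B ∩ C|` is even; hence they are independent and `|F| ≤ |A| + 1`. Here `|A|` is even,
and `A ≠ [n]` as soon as `|F| ≥ 2` (otherwise `|A ∩ B| = |B|` would be both odd and even), so
`|A| ≤ n - 1` for odd `n` and `|A| ≤ n - 2` for even `n`.

Lower bound: the `m - 1`-subsets of an `m`-set `U` meet `i` at a time in `m - i` points,
so for odd `m` they realise the pattern `(0, 1, 0)`; take `U = [n]` or `U = [n] \ {1}`.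
-/

open Finset

theorem linearIndependent_of_pairwise_dotProduct_eq_zero {K ι m : Type*} [Field K] [Fintype m]
    {v : ι → m → K} (hortho : Pairwise fun i j => v i ⬝ᵥ v j = 0) (hself : ∀ i, v i ⬝ᵥ v i ≠ 0) :
    LinearIndependent K v :=
  LinearMap.BilinForm.linearIndependent_of_iIsOrtho (B := dotProductBilin K K) hortho hself

theorem card_le_card_of_odd_inter_of_even_inter {α : Type*} [DecidableEq α] (s : Finset α)
    (G : Finset (Finset α)) (hodd : ∀ B ∈ G, Odd #(s ∩ B))
    (heven : ∀ B ∈ G, ∀ C ∈ G, B ≠ C → Even #(s ∩ B ∩ C)) : #G ≤ #s := by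
  let v : G → s → ZMod 2 := fun B x => if (x : α) ∈ (B : Finset α) then 1 else 0
  have hdot : ∀ B C : G, v B ⬝ᵥ v C = (#(s ∩ B ∩ C) : ZMod 2) := by
    intro B C
    simp only [dotProduct, v, ite_mul, one_mul, zero_mul, ← ite_and]
    rw [sum_coe_sort s fun x => if x ∈ (B : Finset α) ∧ x ∈ (C : Finset α) then 1 else 0,
      sum_boole]
    congr 2; ext; simp
  have hli : LinearIndependent (ZMod 2) v := by
    refine linearIndependent_of_pairwise_dotProduct_eq_zero (fun B C hBC => ?_) (fun B => ?_)
    · show v B ⬝ᵥ v C = 0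
      rw [hdot, ZMod.natCast_eq_zero_iff_even]
      exact heven B B.2 C C.2 (Subtype.coe_ne_coe.mpr hBC)
    · rw [hdot, inter_assoc, inter_self, ZMod.natCast_eq_one_iff_odd.mpr (hodd B B.2)]
      exact one_ne_zero
  simpa using hli.fintype_card_le_finrank

theorem maxPattern_eq_of {k n m : ℕ} {α : Fin k → ZMod 2}
    (hex : ∃ F, SatisfiesPattern n k α F ∧ #F = m)
    (hle : ∀ F, SatisfiesPattern n k α F → #F ≤ m) : maxPattern k α n = m :=
  IsGreatest.csSup_eq ⟨hex, by rintro _ ⟨F, hF, rfl⟩; exact hle F hF⟩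

theorem inf_erase_eq_sdiff {α : Type*} [Fintype α] [DecidableEq α] (U : Finset α)
    {I : Finset α} (hI : I.Nonempty) : I.inf U.erase = U \ I := by
  ext x
  obtain ⟨i, hi⟩ := hI
  simp only [mem_inf, mem_erase, mem_sdiff]
  exact ⟨fun h => ⟨(h i hi).2, fun hx => (h x hx).1 rfl⟩,
    fun h j hj => ⟨fun hxj => h.2 (hxj ▸ hj), h.1⟩⟩

theorem satisfiesPattern_image_erase {n k : ℕ} {α : Fin k → ZMod 2} (U : Finset (Fin n))
    (hα : ∀ i : Fin k, (i : ℕ) < #U → α i = ((#U - (i + 1) : ℕ) : ZMod 2)) :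
    SatisfiesPattern n k α (U.image U.erase) := by
  intro i S hS hcard
  obtain ⟨I, hIU, rfl⟩ := subset_image_iff.mp hS
  have hcardI : #I = i + 1 := by rwa [card_image_of_injOn (U.erase_injOn.mono hIU)] at hcard
  have hIne : I.Nonempty := card_pos.mp (by omega)
  rw [inf_image, Function.id_comp, inf_erase_eq_sdiff U hIne, card_sdiff_of_subset hIU, hcardI,
    hα i (by have := card_le_card hIU; omega)]

theorem satisfiesPattern_010_image_erase {n : ℕ} (U : Finset (Fin n)) (hU : Odd #U) :
    SatisfiesPattern n 3 ![0, 1, 0] (U.image U.erase) := by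
  obtain ⟨m, hm⟩ := hU
  refine satisfiesPattern_image_erase U fun i hi => ?_
  fin_cases i
  · exact (ZMod.natCast_eq_zero_iff_even.mpr ⟨m, by simp; omega⟩).symm
  · exact (ZMod.natCast_eq_one_iff_odd.mpr ⟨m - 1, by simp at hi ⊢; omega⟩).symm
  · exact (ZMod.natCast_eq_zero_iff_even.mpr ⟨m - 1, by simp at hi ⊢; omega⟩).symm

namespace SatisfiesPattern

variable {n : ℕ} {F : Finset (Finset (Fin n))}

theorem even_card (hF : SatisfiesPattern n 3 ![0, 1, 0] F) {B : Finset (Fin n)} (hB : B ∈ F) :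
    Even #B := by
  have := hF 0 {B} (by simpa using hB) (by simp)
  simpa [ZMod.natCast_eq_zero_iff_even] using this

theorem odd_card_inter (hF : SatisfiesPattern n 3 ![0, 1, 0] F) {B C : Finset (Fin n)}
    (hB : B ∈ F) (hC : C ∈ F) (hBC : B ≠ C) : Odd #(B ∩ C) := by
  have := hF 1 {B, C} (by simp [insert_subset_iff, hB, hC]) (card_pair hBC)
  simpa [ZMod.natCast_eq_one_iff_odd] using this

theorem even_card_inter_inter (hF : SatisfiesPattern n 3 ![0, 1, 0] F) {B C D : Finset (Fin n)}
    (hB : B ∈ F) (hC : C ∈ F) (hD : D ∈ F) (hBC : B ≠ C) (hBD : B ≠ D) (hCD : C ≠ D) :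
    Even #(B ∩ C ∩ D) := by
  have hcard : #{B, C, D} = 3 := card_eq_three.mpr ⟨B, C, D, hBC, hBD, hCD, rfl⟩
  have := hF 2 {B, C, D} (by simp [insert_subset_iff, hB, hC, hD]) hcard
  simpa [ZMod.natCast_eq_zero_iff_even, inter_assoc] using this

theorem card_le_card_add_one (hF : SatisfiesPattern n 3 ![0, 1, 0] F) {A : Finset (Fin n)}
    (hA : A ∈ F) : #F ≤ #A + 1 := by
  have := card_le_card_of_odd_inter_of_even_inter A (F.erase A)
    (fun B hB => hF.odd_card_inter hA (mem_of_mem_erase hB) (ne_of_mem_erase hB).symm)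
    (fun B hB C hC hBC => hF.even_card_inter_inter hA (mem_of_mem_erase hB) (mem_of_mem_erase hC)
      (ne_of_mem_erase hB).symm (ne_of_mem_erase hC).symm hBC)
  rw [card_erase_of_mem hA] at this
  omega

theorem ne_univ (hF : SatisfiesPattern n 3 ![0, 1, 0] F) {A B : Finset (Fin n)} (hA : A ∈ F)
    (hB : B ∈ F) (hAB : A ≠ B) : A ≠ univ := by
  rintro rfl
  have := hF.odd_card_inter hA hB hAB
  rw [univ_inter, ← Nat.not_even_iff_odd] at this
  exact this (hF.even_card hB)

theorem exists_even_lt_card_le (hF : SatisfiesPattern n 3 ![0, 1, 0] F) (hn : 1 ≤ n) :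
    ∃ m, Even m ∧ m < n ∧ #F ≤ m + 1 := by
  by_cases hF1 : #F ≤ 1
  · exact ⟨0, ⟨0, rfl⟩, hn, hF1⟩
  obtain ⟨A, hA, B, hB, hAB⟩ := one_lt_card.mp (by omega : 1 < #F)
  refine ⟨#A, hF.even_card hA, ?_, hF.card_le_card_add_one hA⟩
  simpa using (card_lt_iff_ne_univ A).mpr (hF.ne_univ hA hB hAB)

end SatisfiesPattern

theorem f_010 (n : ℕ) (hn : 1 ≤ n) :
    (Odd n → maxPattern 3 ![0, 1, 0] n = n) ∧
    (Even n → maxPattern 3 ![0, 1, 0] n = n - 1) := by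
  refine ⟨fun hodd => maxPattern_eq_of ?_ ?_, fun heven => maxPattern_eq_of ?_ ?_⟩
  · exact ⟨_, satisfiesPattern_010_image_erase univ (by simpa),
      by simp [card_image_of_injOn univ.erase_injOn]⟩
  · intro F hF
    obtain ⟨m, ⟨k, rfl⟩, hm, hF⟩ := hF.exists_even_lt_card_le hn
    obtain ⟨j, rfl⟩ := hodd
    omega
  · let U := univ.erase (⟨0, hn⟩ : Fin n)
    have hU : #U = n - 1 := by simp [U]
    refine ⟨_, satisfiesPattern_010_image_erase U ?_, ?_⟩
    · obtain ⟨k, rfl⟩ := heven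
      exact hU ▸ ⟨k - 1, by omega⟩
    · rw [card_image_of_injOn U.erase_injOn, hU]
  · intro F hF
    obtain ⟨m, ⟨k, rfl⟩, hm, hF⟩ := hF.exists_even_lt_card_le hn
    obtain ⟨j, rfl⟩ := heven
    omega
end

section
/- Let F be a family of subsets of [n] satisfying the (1,1,0)-intersection pattern modulo 2 and let F_i ∈ F. Then |F| − 1 ≤ |F_i|. -/
open Finset

/-!
Restrict every member of `F \ {A}` to `A`. By the pattern `(1, 1, 0)`, the incidence vectors of
these restrictions in `(ZMod 2)^A` are orthonormal for the standard dot product: `|B ∩ A|` is odd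
and `|B ∩ C ∩ A|` is even for `B ≠ C`. So the incidence matrix `M` satisfies `M Mᵀ = I`, and its
`|F| - 1` rows are at most its rank, which is at most its number `|A|` of columns.
-/

open scoped Matrix

theorem Matrix.card_le_card_of_mul_eq_one {m n R : Type*} [Fintype m] [Fintype n] [DecidableEq m]
    [CommRing R] [StrongRankCondition R] {M : Matrix m n R} {N : Matrix n m R} (h : M * N = 1) :
    Fintype.card m ≤ Fintype.card n := by
  calc Fintype.card m = (M * N).rank := by rw [h, Matrix.rank_one]
    _ ≤ M.rank := Matrix.rank_mul_le_left M N
    _ ≤ Fintype.card n := Matrix.rank_le_card_width M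

def restrictedIncidence {ι α : Type*} [DecidableEq α] (R : Type*) [Zero R] [One R]
    (s : ι → Finset α) (A : Finset α) : Matrix ι A R :=
  Matrix.of fun i x => if (x : α) ∈ s i then 1 else 0

theorem restrictedIncidence_mul_transpose_apply {ι α R : Type*} [DecidableEq α]
    [NonAssocSemiring R] (s : ι → Finset α) (A : Finset α) (i j : ι) :
    (restrictedIncidence R s A * (restrictedIncidence R s A)ᵀ) i j = (#(s i ∩ (s j ∩ A)) : R) := by
  simp only [restrictedIncidence, Matrix.mul_apply, Matrix.transpose_apply, Matrix.of_apply,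
    ite_mul, one_mul, zero_mul, ← ite_and]
  rw [Finset.sum_coe_sort A (fun x => if x ∈ s i ∧ x ∈ s j then (1 : R) else 0), sum_boole]
  congr 2
  ext x
  simp only [mem_filter, mem_inter]
  tauto

section SatisfiesPattern

variable {n k : ℕ} {α : Fin k → ZMod 2} {F : Finset (Finset (Fin n))}

theorem SatisfiesPattern.card_inter_of_ne (hF : SatisfiesPattern n k α F) (hk : 1 < k)
    {B C : Finset (Fin n)} (hB : B ∈ F) (hC : C ∈ F) (hBC : B ≠ C) :
    (#(B ∩ C) : ZMod 2) = α ⟨1, hk⟩ := by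
  simpa using hF ⟨1, hk⟩ {B, C} (by simp [insert_subset_iff, hB, hC]) (card_pair hBC)

theorem SatisfiesPattern.card_inter_inter_of_ne (hF : SatisfiesPattern n k α F) (hk : 2 < k)
    {B C D : Finset (Fin n)} (hB : B ∈ F) (hC : C ∈ F) (hD : D ∈ F)
    (hBC : B ≠ C) (hBD : B ≠ D) (hCD : C ≠ D) :
    (#(B ∩ (C ∩ D)) : ZMod 2) = α ⟨2, hk⟩ := by
  have hcard : #({B, C, D} : Finset (Finset (Fin n))) = 2 + 1 := by
    rw [card_insert_of_notMem (by simp [hBC, hBD]), card_pair hCD]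
  simpa using hF ⟨2, hk⟩ {B, C, D} (by simp [insert_subset_iff, hB, hC, hD]) hcard

end SatisfiesPattern

theorem lemma_110_sets (n : ℕ) (F : Finset (Finset (Fin n)))
    (hF : SatisfiesPattern n 3 ![1, 1, 0] F) (A : Finset (Fin n)) (hA : A ∈ F) :
    F.card - 1 ≤ A.card := by
  classical
  let M := restrictedIncidence (ZMod 2) (fun B : F.erase A => (B : Finset (Fin n))) A
  have hM : M * Mᵀ = 1 := by
    ext ⟨B, hB⟩ ⟨C, hC⟩
    rw [mem_erase] at hB hC
    rw [restrictedIncidence_mul_transpose_apply, Matrix.one_apply]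
    by_cases hBC : B = C
    · subst hBC
      simpa using hF.card_inter_of_ne (by decide) hB.2 hA hB.1
    · simpa [hBC] using hF.card_inter_inter_of_ne (by decide) hB.2 hC.2 hA hBC hB.1 hC.1
  have := Matrix.card_le_card_of_mul_eq_one hM
  rwa [Fintype.card_coe, Fintype.card_coe, card_erase_of_mem hA] at this
end

section
/- Every family F of subsets of [n] satisfying the (1,1,0)-intersection pattern modulo 2 has size at most n/2 + 1, i.e., 2(|F| − 1) ≤ n. -/
open Finset

/-
Fix `A ∈ F` and view the traces of the other members of `F` as vectors over `𝔽₂`. Inside `A` the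
traces `B ∩ A` are orthonormal (odd sizes, even pairwise intersections because triple
intersections are even), hence independent, so `|F| - 1 ≤ |A|`. Outside `A` the traces `B \ A`
have even size and pairwise odd intersections; the sums `(B \ A) + (B₀ \ A)` are biorthogonal to
the traces `B \ A` (`B ≠ A, B₀`), and the all-ones vector, orthogonal to every trace, lies outside
their span. This gives `|F| - 1 ≤ n - |A|` whenever `A ≠ [n]`.
-/

section Biorthogonal

variable {K ι X : Type*} [Field K] [Fintype ι] [DecidableEq ι] [Fintype X]

theorem linearIndependent_of_dotProduct_eq_ite {u w : ι → X → K}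
    (huw : ∀ i j, u i ⬝ᵥ w j = if i = j then 1 else 0) : LinearIndependent K u := by
  refine LinearIndependent.of_comp (Matrix.of w).mulVecLin ?_
  convert (Pi.basisFun K ι).linearIndependent with i
  ext j
  simp [Matrix.mulVec, dotProduct_comm, huw, Pi.single_apply, eq_comm]

theorem card_le_of_dotProduct_eq_ite {u w : ι → X → K}
    (huw : ∀ i j, u i ⬝ᵥ w j = if i = j then 1 else 0) :
    Fintype.card ι ≤ Fintype.card X := by
  simpa using (linearIndependent_of_dotProduct_eq_ite huw).fintype_card_le_finrank

theorem card_add_one_le_of_dotProduct_eq_ite {u w : ι → X → K}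
    (huw : ∀ i j, u i ⬝ᵥ w j = if i = j then 1 else 0) {v : X → K} (hv : v ≠ 0)
    (hvw : ∀ j, v ⬝ᵥ w j = 0) : Fintype.card ι + 1 ≤ Fintype.card X := by
  have hv_span : v ∉ Submodule.span K (Set.range u) := by
    rintro hmem
    obtain ⟨c, rfl⟩ := (Submodule.mem_span_range_iff_exists_fun K).mp hmem
    have hc : c = 0 := funext fun j => by
      simpa [sum_dotProduct, huw] using hvw j
    simp [hc] at hv
  simpa using ((linearIndependent_of_dotProduct_eq_ite huw).option hv_span).fintype_card_le_finrank

end Biorthogonal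

namespace Finset

variable {α R : Type*} [DecidableEq α]

theorem natCast_card_compl_inter [Fintype α] [Ring R] (A D : Finset α) :
    (#(Aᶜ ∩ D) : R) = #D - #(A ∩ D) := by
  rw [eq_sub_iff_add_eq, ← Nat.cast_add, inter_comm Aᶜ, ← sdiff_eq_inter_compl, inter_comm A,
    add_comm, card_inter_add_card_sdiff]

def indicatorOn [Zero R] [One R] (S B : Finset α) : S → R := fun x => if (x : α) ∈ B then 1 else 0

variable [NonAssocSemiring R]

theorem one_dotProduct_indicatorOn (S B : Finset α) :
    1 ⬝ᵥ (indicatorOn S B : S → R) = #(S ∩ B) := by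
  simp only [dotProduct, Pi.one_apply, one_mul, indicatorOn]
  rw [univ_eq_attach, sum_attach S (fun x => if x ∈ B then (1 : R) else 0), sum_boole,
    filter_mem_eq_inter]

theorem indicatorOn_dotProduct_indicatorOn (S B C : Finset α) :
    (indicatorOn S B : S → R) ⬝ᵥ indicatorOn S C = #(S ∩ (B ∩ C)) := by
  rw [← one_dotProduct_indicatorOn]
  refine sum_congr rfl fun x _ => ?_
  simp only [indicatorOn, mem_inter, Pi.one_apply, one_mul, ite_zero_mul_ite_zero, mul_one]

end Finset

namespace SatisfiesPattern

variable {n k : ℕ} {α : Fin k → ZMod 2} {F : Finset (Finset (Fin n))} {B C D : Finset (Fin n)}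

theorem natCast_card_of_mem (hF : SatisfiesPattern n k α F) (hk : 0 < k) (hB : B ∈ F) :
    (#B : ZMod 2) = α ⟨0, hk⟩ := by
  simpa using hF ⟨0, hk⟩ {B} (by simpa using hB) (by simp)

theorem natCast_card_inter_of_ne (hF : SatisfiesPattern n k α F) (hk : 1 < k) (hB : B ∈ F)
    (hC : C ∈ F) (hBC : B ≠ C) : (#(B ∩ C) : ZMod 2) = α ⟨1, hk⟩ := by
  simpa using hF ⟨1, hk⟩ {B, C} (by simp [insert_subset_iff, hB, hC]) (card_pair hBC)

theorem natCast_card_inter_inter_of_ne (hF : SatisfiesPattern n k α F) (hk : 2 < k) (hB : B ∈ F)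
    (hC : C ∈ F) (hD : D ∈ F) (hBC : B ≠ C) (hBD : B ≠ D) (hCD : C ≠ D) :
    (#(B ∩ (C ∩ D)) : ZMod 2) = α ⟨2, hk⟩ := by
  have hcard : #{B, C, D} = 3 := by
    rw [card_insert_of_notMem (by simp [hBC, hBD]), card_pair hCD]
  simpa using hF ⟨2, hk⟩ {B, C, D} (by simp [insert_subset_iff, hB, hC, hD]) hcard

end SatisfiesPattern

section Pattern110

variable {n : ℕ} {F : Finset (Finset (Fin n))} {A : Finset (Fin n)}

theorem card_sub_one_le_card_of_mem (hF : SatisfiesPattern n 3 ![1, 1, 0] F) (hA : A ∈ F) :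
    #F - 1 ≤ #A := by
  have hmem (B : F.erase A) : (B : Finset (Fin n)) ≠ A ∧ (B : Finset (Fin n)) ∈ F :=
    mem_erase.mp B.2
  have huw (B C : F.erase A) : indicatorOn A B ⬝ᵥ indicatorOn A C =
      if B = C then (1 : ZMod 2) else 0 := by
    rw [indicatorOn_dotProduct_indicatorOn]
    split_ifs with hBC
    · rw [hBC, inter_self]
      exact hF.natCast_card_inter_of_ne (by norm_num) hA (hmem C).2 (hmem C).1.symm
    · exact hF.natCast_card_inter_inter_of_ne (by norm_num) hA (hmem B).2 (hmem C).2
        (hmem B).1.symm (hmem C).1.symm (Subtype.coe_injective.ne hBC)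
  simpa only [Fintype.card_coe, card_erase_of_mem hA] using card_le_of_dotProduct_eq_ite huw

theorem natCast_card_compl_inter_of_mem (hF : SatisfiesPattern n 3 ![1, 1, 0] F) (hA : A ∈ F)
    {B : Finset (Fin n)} (hB : B ∈ F) (hBA : B ≠ A) : (#(Aᶜ ∩ B) : ZMod 2) = 0 := by
  rw [natCast_card_compl_inter, hF.natCast_card_of_mem (by norm_num) hB,
    hF.natCast_card_inter_of_ne (by norm_num) hA hB hBA.symm]
  rfl

theorem natCast_card_compl_inter_inter_of_ne (hF : SatisfiesPattern n 3 ![1, 1, 0] F)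
    (hA : A ∈ F) {B C : Finset (Fin n)} (hB : B ∈ F) (hC : C ∈ F) (hBA : B ≠ A) (hCA : C ≠ A)
    (hBC : B ≠ C) : (#(Aᶜ ∩ (B ∩ C)) : ZMod 2) = 1 := by
  rw [natCast_card_compl_inter, hF.natCast_card_inter_of_ne (by norm_num) hB hC hBC,
    hF.natCast_card_inter_inter_of_ne (by norm_num) hA hB hC hBA.symm hCA.symm hBC]
  rfl

theorem card_sub_one_le_card_compl_of_mem (hF : SatisfiesPattern n 3 ![1, 1, 0] F) (hA : A ∈ F)
    (hA_univ : A ≠ univ) {B₀ : Finset (Fin n)} (hB₀ : B₀ ∈ F) (hB₀A : B₀ ≠ A) :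
    #F - 1 ≤ #Aᶜ := by
  have hmem (B : (F.erase A).erase B₀) :
      (B : Finset (Fin n)) ≠ B₀ ∧ (B : Finset (Fin n)) ≠ A ∧ (B : Finset (Fin n)) ∈ F := by
    simpa only [mem_erase] using B.2
  have hw₀ (B : (F.erase A).erase B₀) :
      indicatorOn Aᶜ B₀ ⬝ᵥ indicatorOn Aᶜ B = (1 : ZMod 2) := by
    rw [indicatorOn_dotProduct_indicatorOn]
    exact natCast_card_compl_inter_inter_of_ne hF hA hB₀ (hmem B).2.2 hB₀A (hmem B).2.1
      (hmem B).1.symm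
  have huw (B C : (F.erase A).erase B₀) :
      (indicatorOn Aᶜ B + indicatorOn Aᶜ B₀) ⬝ᵥ indicatorOn Aᶜ C =
        if B = C then (1 : ZMod 2) else 0 := by
    rw [add_dotProduct, hw₀, indicatorOn_dotProduct_indicatorOn]
    split_ifs with hBC
    · rw [hBC, inter_self, natCast_card_compl_inter_of_mem hF hA (hmem C).2.2 (hmem C).2.1,
        zero_add]
    · rw [natCast_card_compl_inter_inter_of_ne hF hA (hmem B).2.2 (hmem C).2.2 (hmem B).2.1
        (hmem C).2.1 (Subtype.coe_injective.ne hBC)]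
      rfl
  have hv (C : (F.erase A).erase B₀) : 1 ⬝ᵥ indicatorOn Aᶜ C = (0 : ZMod 2) := by
    rw [one_dotProduct_indicatorOn]
    exact natCast_card_compl_inter_of_mem hF hA (hmem C).2.2 (hmem C).2.1
  have : Nonempty (Aᶜ : Finset (Fin n)) :=
    (nonempty_iff_ne_empty.mpr ((compl_eq_empty_iff A).not.mpr hA_univ)).to_subtype
  have hcard := card_add_one_le_of_dotProduct_eq_ite huw one_ne_zero hv
  rw [Fintype.card_coe, Fintype.card_coe, card_erase_of_mem (mem_erase.mpr ⟨hB₀A, hB₀⟩),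
    card_erase_of_mem hA] at hcard
  omega

end Pattern110

theorem bound_110 (n : ℕ) (F : Finset (Finset (Fin n)))
    (hF : SatisfiesPattern n 3 ![1, 1, 0] F) :
    2 * (F.card - 1) ≤ n := by
  rcases le_or_gt #F 1 with hF_le | hF_gt
  · omega
  obtain ⟨A, hA, hA_univ⟩ := exists_mem_ne hF_gt univ
  obtain ⟨B₀, hB₀, hB₀A⟩ := exists_mem_ne hF_gt A
  have h_in := card_sub_one_le_card_of_mem hF hA
  have h_out := card_sub_one_le_card_compl_of_mem hF hA hA_univ hB₀ hB₀A
  have h_total : #A + #Aᶜ = n := by rw [card_add_card_compl, Fintype.card_fin]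
  omega
end
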